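/- arXiv:1011.2451 — 9 statements merged into one kernel-verified Lean document; each statement's English description precedes it below -/
import Mathlib

section
/- Let K be a p-adic field, m ≥ 1, a ∈ Δ' nonzero, f = f_{m+1,a} the flow map, and fix a nonzero x ∈ 𝔭 sufficiently small. Then the orbit map φ : ℤ_p → K, φ(z) = f^{∘z}(x), satisfies |φ(z) − φ(z′)| = |a x^{m+1}| · |z − z′| for all z, z′ ∈ ℤ_p. In particular φ is a bi-Lipschitz homeomorphism onto its image. -/
/-!
For small `x` every `r = root z x` is a `1`-unit, `‖r - 1‖ ≤ ‖x‖ < ‖m‖`. On such units the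
factor `∑ rⁱ r'^(m-1-i)` of `r^m - r'^m` is `m` up to an error of norm `< ‖m‖`, so
`‖r^m - r'^m‖ = ‖m‖ ‖r - r'‖`. Since `r^m - r'^m = (z' - z) a m x^m`, this gives
`‖r - r'‖ = ‖a‖ ‖x‖^m ‖z - z'‖`, and dividing `x` by units multiplies this by `‖x‖`.
-/

open IsUltrametricDist

lemma IsUltrametricDist.norm_eq_of_norm_sub_lt {S : Type*} [SeminormedAddGroup S]
    [IsUltrametricDist S] {a b : S} (h : ‖a - b‖ < ‖b‖) : ‖a‖ = ‖b‖ := by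
  simpa [max_eq_right h.le] using norm_add_eq_max_of_norm_ne_norm h.ne

lemma norm_div_sub_div_of_norm_eq_one {K : Type*} [NormedField K] {x r s : K}
    (hr : ‖r‖ = 1) (hs : ‖s‖ = 1) : ‖x / r - x / s‖ = ‖x‖ * ‖r - s‖ := by
  have hr0 : r ≠ 0 := norm_ne_zero_iff.mp (by simp [hr])
  have hs0 : s ≠ 0 := norm_ne_zero_iff.mp (by simp [hs])
  rw [div_sub_div _ _ hr0 hs0, show x * s - r * x = x * (s - r) by ring]
  simp [hr, hs, norm_sub_rev s r]

section UltrametricField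

variable {K : Type*} [NormedField K] [IsUltrametricDist K]

lemma IsUltrametricDist.norm_mul_sub_one_le_max {u v : K} (hu : ‖u‖ ≤ 1) :
    ‖u * v - 1‖ ≤ max ‖u - 1‖ ‖v - 1‖ := by
  rw [show u * v - 1 = u * (v - 1) + (u - 1) by ring, max_comm]
  refine (norm_add_le_max _ _).trans (max_le_max_right _ ?_)
  simpa [norm_mul] using mul_le_of_le_one_left (norm_nonneg _) hu

lemma IsUltrametricDist.norm_pow_sub_one_le {u : K} (hu : ‖u‖ ≤ 1) (n : ℕ) :
    ‖u ^ n - 1‖ ≤ ‖u - 1‖ := by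
  induction n with
  | zero => simp
  | succ n ih =>
    rw [pow_succ]
    exact (norm_mul_sub_one_le_max (by simpa using pow_le_one₀ (norm_nonneg u) hu)).trans
      (max_le ih le_rfl)

lemma IsUltrametricDist.norm_le_one_of_norm_sub_one_le_one {u : K} (hu : ‖u - 1‖ ≤ 1) :
    ‖u‖ ≤ 1 := by
  simpa using (norm_add_le_max (u - 1) 1).trans (max_le hu norm_one.le)

lemma IsUltrametricDist.norm_geom_sum₂_eq_norm_natCast {r s : K} {n : ℕ}
    (hr : ‖r - 1‖ < ‖(n : K)‖) (hs : ‖s - 1‖ < ‖(n : K)‖) :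
    ‖∑ i ∈ Finset.range n, r ^ i * s ^ (n - 1 - i)‖ = ‖(n : K)‖ := by
  have hn1 := norm_natCast_le_one K n
  have hr1 := norm_le_one_of_norm_sub_one_le_one (hr.le.trans hn1)
  have hs1 := norm_le_one_of_norm_sub_one_le_one (hs.le.trans hn1)
  refine norm_eq_of_norm_sub_lt (lt_of_le_of_lt ?_ (max_lt hr hs))
  rw [show (n : K) = ∑ _i ∈ Finset.range n, (1 : K) by simp, ← Finset.sum_sub_distrib]
  refine norm_sum_le_of_forall_le_of_nonneg (by positivity) fun i _ => ?_
  have hri : ‖r ^ i‖ ≤ 1 := by simpa using pow_le_one₀ (norm_nonneg r) hr1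
  exact (norm_mul_sub_one_le_max hri).trans
    (max_le_max (norm_pow_sub_one_le hr1 i) (norm_pow_sub_one_le hs1 _))

lemma IsUltrametricDist.norm_pow_sub_pow_eq {r s : K} {n : ℕ}
    (hr : ‖r - 1‖ < ‖(n : K)‖) (hs : ‖s - 1‖ < ‖(n : K)‖) :
    ‖r ^ n - s ^ n‖ = ‖(n : K)‖ * ‖r - s‖ := by
  rw [← geom_sum₂_mul, norm_mul, norm_geom_sum₂_eq_norm_natCast hr hs]

lemma IsUltrametricDist.norm_sub_one_le_of_norm_sub_le {m : ℕ} (hm : 1 ≤ m) {a c x r : K}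
    (ha : ‖a‖ ≤ 1) (hc : ‖c‖ ≤ 1) (hx : ‖x‖ ≤ 1)
    (hr : ‖r - (1 - c * a * x ^ m)‖ ≤ ‖(m : K) * x ^ (m + 1)‖) :
    ‖r - 1‖ ≤ ‖x‖ := by
  have hxm : ‖x‖ ^ m ≤ ‖x‖ := pow_le_of_le_one (norm_nonneg x) hx (by omega)
  rw [show r - 1 = (r - (1 - c * a * x ^ m)) + -c * a * x ^ m by ring]
  refine (norm_add_le_max _ _).trans (max_le (hr.trans ?_) ?_) <;>
    simp only [norm_mul, norm_pow, norm_neg]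
  · calc ‖(m : K)‖ * ‖x‖ ^ (m + 1) ≤ 1 * ‖x‖ ^ m :=
          mul_le_mul (norm_natCast_le_one K m)
            (pow_le_pow_of_le_one (norm_nonneg x) hx (by omega)) (by positivity) zero_le_one
      _ ≤ ‖x‖ := by rwa [one_mul]
  · calc ‖c‖ * ‖a‖ * ‖x‖ ^ m ≤ 1 * 1 * ‖x‖ ^ m := by gcongr
      _ ≤ ‖x‖ := by rwa [one_mul, one_mul]

lemma IsUltrametricDist.norm_eq_one_of_norm_sub_one_lt_one {u : K} (hu : ‖u - 1‖ < 1) :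
    ‖u‖ = 1 := by
  simpa using norm_eq_of_norm_sub_lt (b := (1 : K)) (by simpa using hu)

lemma IsUltrametricDist.norm_div_sub_div_of_pow_sub_pow {n : ℕ} {x r s t : K}
    (hr : ‖r - 1‖ < ‖(n : K)‖) (hs : ‖s - 1‖ < ‖(n : K)‖) (hrs : r ^ n - s ^ n = n * t) :
    ‖x / r - x / s‖ = ‖x‖ * ‖t‖ := by
  have hn0 : ‖(n : K)‖ ≠ 0 := ((norm_nonneg _).trans_lt hr).ne'
  have hn1 := norm_natCast_le_one K n
  have hsub : ‖r - s‖ = ‖t‖ := by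
    refine mul_left_cancel₀ hn0 ?_
    rw [← norm_pow_sub_pow_eq hr hs, hrs, norm_mul]
  rw [norm_div_sub_div_of_norm_eq_one (norm_eq_one_of_norm_sub_one_lt_one (hr.trans_le hn1))
    (norm_eq_one_of_norm_sub_one_lt_one (hs.trans_le hn1)), hsub]

end UltrametricField

lemma injective_of_norm_sub_eq_mul {α β : Type*} [NormedAddCommGroup α]
    [SeminormedAddCommGroup β] {f : α → β} {C : ℝ} (hC : C ≠ 0)
    (h : ∀ z z', ‖f z - f z'‖ = C * ‖z - z'‖) : Function.Injective f := fun z z' hzz' => by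
  simpa [hzz', hC, sub_eq_zero] using (h z z').symm

theorem stmt3_general {p : ℕ} [Fact p.Prime] {K : Type*} [NontriviallyNormedField K]
    [IsUltrametricDist K] [Algebra ℚ_[p] K]
    (hext : ∀ x : ℚ_[p], ‖algebraMap ℚ_[p] K x‖ = ‖x‖)
    (m : ℕ) (hm : 1 ≤ m) (a : K) (ha0 : 0 < ‖a‖) (ha1 : ‖a‖ ≤ 1)
    (root : ℤ_[p] → K → K)
    (hroot : ∀ (z : ℤ_[p]) (x : K), ‖x‖ < 1 →
        (root z x) ^ m = 1 - algebraMap ℚ_[p] K (z : ℚ_[p]) * a * m * x ^ m ∧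
        ‖root z x - (1 - algebraMap ℚ_[p] K (z : ℚ_[p]) * a * x ^ m)‖ ≤
          ‖(m : K) * x ^ (m + 1)‖) :
    ∃ ε > 0, ∀ x : K, 0 < ‖x‖ → ‖x‖ < ε →
      (∀ z z' : ℤ_[p],
        ‖x / root z x - x / root z' x‖ = ‖a‖ * ‖x‖ ^ (m + 1) * ‖z - z'‖) ∧
      Function.Injective (fun z : ℤ_[p] => x / root z x) := by
  have hm0 : 0 < ‖(m : K)‖ := by
    rw [← map_natCast (algebraMap ℚ_[p] K), hext, norm_pos_iff, Nat.cast_ne_zero]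
    omega
  have hnorm_coe (z : ℤ_[p]) : ‖algebraMap ℚ_[p] K z‖ = ‖z‖ := by
    rw [hext, PadicInt.padic_norm_e_of_padicInt]
  refine ⟨min 1 ‖(m : K)‖, lt_min one_pos hm0, fun x hx0 hxε => ?_⟩
  have hx1 : ‖x‖ < 1 := hxε.trans_le (min_le_left _ _)
  have hnear (z : ℤ_[p]) : ‖root z x - 1‖ < ‖(m : K)‖ :=
    (norm_sub_one_le_of_norm_sub_le hm ha1 ((hnorm_coe z).trans_le z.norm_le_one) hx1.le
      (hroot z x hx1).2).trans_lt (hxε.trans_le (min_le_right _ _))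
  have hdist (z z' : ℤ_[p]) :
      ‖x / root z x - x / root z' x‖ = ‖a‖ * ‖x‖ ^ (m + 1) * ‖z - z'‖ := by
    have hpow : root z x ^ m - root z' x ^ m =
        m * (algebraMap ℚ_[p] K ((z' - z : ℤ_[p]) : ℚ_[p]) * a * x ^ m) := by
      rw [(hroot z x hx1).1, (hroot z' x hx1).1]
      push_cast
      ring
    rw [norm_div_sub_div_of_pow_sub_pow (hnear z) (hnear z') hpow]
    simp only [norm_mul, norm_pow, hnorm_coe, norm_sub_rev z']
    ring
  exact ⟨hdist, injective_of_norm_sub_eq_mul (by positivity) hdist⟩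

/-- for the flow `f^{∘z}(x) = x / (1 - z a m x^m)^{1/m}` on a p-adic
field `K` (with the canonical Hensel `m`-th root), and `x ≠ 0` sufficiently small,
the orbit map `φ(z) = f^{∘z}(x)` satisfies
`‖φ(z) - φ(z')‖ = ‖a‖ ‖x‖^{m+1} ‖z - z'‖` for all `z, z' ∈ ℤ_p`; in particular it
is injective (a bi-Lipschitz homeomorphism onto its image). -/
theorem stmt3 {p : ℕ} [Fact p.Prime] {K : Type*} [NontriviallyNormedField K]
    [CompleteSpace K] [IsUltrametricDist K] [Algebra ℚ_[p] K]
    (hext : ∀ x : ℚ_[p], ‖algebraMap ℚ_[p] K x‖ = ‖x‖)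
    (m : ℕ) (hm : 1 ≤ m) (a : K) (ha0 : 0 < ‖a‖) (ha1 : ‖a‖ ≤ 1)
    (root : ℤ_[p] → K → K)
    (hroot : ∀ (z : ℤ_[p]) (x : K), ‖x‖ < 1 →
        (root z x) ^ m = 1 - algebraMap ℚ_[p] K (z : ℚ_[p]) * a * m * x ^ m ∧
        ‖root z x - (1 - algebraMap ℚ_[p] K (z : ℚ_[p]) * a * x ^ m)‖ ≤
          ‖(m : K) * x ^ (m + 1)‖) :
    ∃ ε > 0, ∀ x : K, 0 < ‖x‖ → ‖x‖ < ε →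
      (∀ z z' : ℤ_[p],
        ‖x / root z x - x / root z' x‖ = ‖a‖ * ‖x‖ ^ (m + 1) * ‖z - z'‖) ∧
      Function.Injective (fun z : ℤ_[p] => x / root z x) :=
  stmt3_general hext m hm a ha0 ha1 root hroot
end

section
/- Let K be a p-adic field, m ≥ 1, a ∈ Δ' nonzero, and x ∈ 𝔭 sufficiently small. Then for every z ∈ ℤ_p, |f_{m+1,a}^{∘z}(x) − x| = |a z x^{m+1}|. -/
open IsUltrametricDist in
/-- helper: norm unchanged by adding something strictly smaller -/
lemma norm_add_small {K : Type*} [NormedField K] [IsUltrametricDist K]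
    {u v : K} (h : ‖u‖ < ‖v‖) : ‖u + v‖ = ‖v‖ := by
  have h1 : ‖u + v‖ ≤ ‖v‖ := (norm_add_le_max u v).trans (max_le h.le le_rfl)
  have h2 : ‖v‖ ≤ max ‖u + v‖ ‖u‖ := by
    simpa using norm_add_le_max (u + v) (-u)
  rcases max_cases ‖u + v‖ ‖u‖ with ⟨he, _⟩ | ⟨he, _⟩
  · exact le_antisymm h1 (h2.trans_eq he)
  · exact absurd (h2.trans_eq he) (not_le.mpr h)

/-- for the flow `f^{∘z}(x) = x / (1 - z a m x^m)^{1/m}` on a p-adic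
field `K` (with the canonical Hensel `m`-th root) and `x` sufficiently small,
`‖f^{∘z}(x) - x‖ = ‖a z x^{m+1}‖ = ‖a‖ ‖z‖ ‖x‖^{m+1}` for every `z ∈ ℤ_p`. -/
theorem stmt4 {p : ℕ} [Fact p.Prime] {K : Type*} [NontriviallyNormedField K]
    [CompleteSpace K] [IsUltrametricDist K] [Algebra ℚ_[p] K]
    (hext : ∀ x : ℚ_[p], ‖algebraMap ℚ_[p] K x‖ = ‖x‖)
    (m : ℕ) (hm : 1 ≤ m) (a : K) (ha0 : 0 < ‖a‖) (ha1 : ‖a‖ ≤ 1)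
    (root : ℤ_[p] → K → K)
    (hroot : ∀ (z : ℤ_[p]) (x : K), ‖x‖ < 1 →
        (root z x) ^ m = 1 - algebraMap ℚ_[p] K (z : ℚ_[p]) * a * m * x ^ m ∧
        ‖root z x - (1 - algebraMap ℚ_[p] K (z : ℚ_[p]) * a * x ^ m)‖ ≤
          ‖(m : K) * x ^ (m + 1)‖) :
    ∃ ε > 0, ∀ x : K, ‖x‖ < ε → ∀ z : ℤ_[p],
      ‖x / root z x - x‖ = ‖a‖ * ‖z‖ * ‖x‖ ^ (m + 1) := by
  have hmK : (m : K) = algebraMap ℚ_[p] K (m : ℚ_[p]) := by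
    rw [map_natCast]
  have hm0 : (m : ℚ_[p]) ≠ 0 := Nat.cast_ne_zero.mpr (by omega)
  have hmpos : 0 < ‖(m : K)‖ := by
    rw [hmK, hext]; exact norm_pos_iff.mpr hm0
  have hmle1 : ‖(m : K)‖ ≤ 1 := by
    rw [hmK, hext]
    exact_mod_cast Padic.norm_int_le_one (m : ℤ)
  refine ⟨‖(m : K)‖, hmpos, fun x hx z => ?_⟩
  have hx1 : ‖x‖ < 1 := lt_of_lt_of_le hx hmle1
  by_cases hx0 : x = 0
  · simp [hx0, zero_pow (Nat.succ_ne_zero m)]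
  obtain ⟨h1, h2⟩ := hroot z x hx1
  set r := root z x with hr
  set c := algebraMap ℚ_[p] K (z : ℚ_[p]) * a with hcdef
  have hcnorm : ‖c‖ = ‖z‖ * ‖a‖ := by
    rw [hcdef, norm_mul, hext, PadicInt.padic_norm_e_of_padicInt]
  have hcle : ‖c‖ ≤ 1 := by
    rw [hcnorm]
    exact mul_le_one₀ z.norm_le_one (norm_nonneg a) ha1
  -- bound on u = r - (1 - c x^m)
  have hu : ‖r - (1 - c * x ^ m)‖ ≤ ‖(m : K)‖ * ‖x‖ ^ (m + 1) := by
    calc ‖r - (1 - c * x ^ m)‖ ≤ ‖(m : K) * x ^ (m + 1)‖ := h2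
    _ = ‖(m : K)‖ * ‖x‖ ^ (m + 1) := by rw [norm_mul, norm_pow]
  have hxm1 : ‖x‖ ^ (m + 1) < 1 := pow_lt_one₀ (norm_nonneg x) hx1 (Nat.succ_ne_zero m)
  have hxmx : ‖x‖ ^ m ≤ ‖x‖ := pow_le_of_le_one (norm_nonneg x) hx1.le (by omega)
  -- ‖r - 1‖ < ‖m‖
  have hr1 : ‖r - 1‖ < ‖(m : K)‖ := by
    have : r - 1 = (r - (1 - c * x ^ m)) + (-(c * x ^ m)) := by ring
    rw [this]
    refine lt_of_le_of_lt (IsUltrametricDist.norm_add_le_max _ _) (max_lt ?_ ?_)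
    · exact lt_of_le_of_lt hu (by nlinarith)
    · rw [norm_neg, norm_mul, norm_pow]
      calc ‖c‖ * ‖x‖ ^ m ≤ 1 * ‖x‖ := by
            exact mul_le_mul hcle hxmx (by positivity) one_pos.le
      _ = ‖x‖ := one_mul _
      _ < ‖(m : K)‖ := hx
  have hr1' : ‖r - 1‖ < 1 := lt_of_lt_of_le hr1 hmle1
  have hrnorm : ‖r‖ = 1 := by
    have : r = (r - 1) + 1 := by ring
    rw [this, norm_add_small (by simpa using hr1')]; simp
  have hrne : r ≠ 0 := by
    intro h; rw [h, norm_zero] at hrnorm; norm_num at hrnorm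
  -- geometric sum
  set S := ∑ i ∈ Finset.range m, r ^ i with hSdef
  have hgeom : S * (r - 1) = r ^ m - 1 := geom_sum_mul r m
  have hrpow : ∀ i, ‖r ^ i - 1‖ ≤ ‖r - 1‖ := by
    intro i
    rw [← geom_sum_mul r i, norm_mul]
    refine mul_le_of_le_one_left (norm_nonneg _) ?_
    refine IsUltrametricDist.norm_sum_le_of_forall_le_of_nonneg one_pos.le fun j _ => ?_
    rw [norm_pow, hrnorm, one_pow]
  have hSm : ‖S - (m : K)‖ ≤ ‖r - 1‖ := by
    have : S - (m : K) = ∑ i ∈ Finset.range m, (r ^ i - 1) := by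
      rw [Finset.sum_sub_distrib]
      simp [hSdef]
    rw [this]
    exact IsUltrametricDist.norm_sum_le_of_forall_le_of_nonneg (norm_nonneg _)
      fun i _ => hrpow i
  have hSnorm : ‖S‖ = ‖(m : K)‖ := by
    have : S = (S - (m : K)) + (m : K) := by ring
    rw [this, norm_add_small (lt_of_le_of_lt hSm hr1)]
  -- key equality
  have hkey : ‖r - 1‖ * ‖(m : K)‖ = ‖c‖ * ‖(m : K)‖ * ‖x‖ ^ m := by
    have e : S * (r - 1) = -(c * (m : K) * x ^ m) := by
      rw [hgeom, h1]; ring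
    have := congrArg norm e
    rw [norm_mul, norm_neg, norm_mul, norm_mul, norm_pow, hSnorm] at this
    linarith
  have hr1eq : ‖r - 1‖ = ‖c‖ * ‖x‖ ^ m :=
    mul_right_cancel₀ hmpos.ne' (by rw [hkey]; ring)
  have : x / r - x = x * (1 - r) / r := by
    field_simp
  rw [this, norm_div, norm_mul, hrnorm, div_one, ← norm_neg (1 - r)]
  have : -(1 - r) = r - 1 := by ring
  rw [this, hr1eq, hcnorm, pow_succ]
  ring
end

section
/- Let p be prime, m ≥ 1, a ∈ ℚ_p nonzero with ord_p(a) = k. Then for all sufficiently large i ≥ 1, the circle C(0, p^{-i}) = p^i ℤ_p^× is partitioned into exactly p^{im+k−1}(p−1) distinct ℤ_p-orbits of the map f_{m+1,a}, where each ℤ_p-orbit is a coset x + a x^{m+1} ℤ_p. -/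
/-! The orbit `x + a x^{m+1} ℤ_p` of a point with `|x| = p^{-i}` is the closed ball around `x` of
radius `|a x^{m+1}| = p^{-(i+n)}`, `n = im + k`. Closed balls of equal radius in an ultrametric
space are equal or disjoint, and one of radius `< p^{-i}` centred on the circle `|x| = p^{-i}` lies
in that circle. Writing the centres as `p^i z` with `z ∈ ℤ_p^×`, two such balls coincide iff
`z ≡ z' mod p^n`, so the orbits are counted by `(ℤ/p^n)^×`, of order `φ(p^n) = p^{n-1}(p-1)`. -/

/-- The collection of `ℤ_p`-orbits `x + a x^{m+1} ℤ_p` of the flow `f_{m+1,a}`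
with base point on the circle `C(0, p^{-i})`. -/
def orbitFamily (p : ℕ) [Fact p.Prime] (m : ℕ) (a : ℚ_[p]) (i : ℕ) : Set (Set ℚ_[p]) :=
  {s | ∃ x : ℚ_[p], ‖x‖ = (p : ℝ) ^ (-(i : ℤ)) ∧
    s = {y | ∃ c : ℤ_[p], y = x + a * x ^ (m + 1) * (c : ℚ_[p])}}

open Metric Function

lemma Nat.card_range_of_surjective_of_eq_iff {α β γ : Type*} {f : α → β} {g : α → γ}
    (hg : Surjective g) (h : ∀ a b, f a = f b ↔ g a = g b) : Nat.card (Set.range f) = Nat.card γ :=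
  Nat.card_congr <| (Setoid.quotientKerEquivRange f).symm.trans <|
    (Quotient.congrRight h).trans (Setoid.quotientKerEquivOfSurjective g hg)

namespace IsUltrametricDist

lemma closedBall_eq_closedBall_iff {X : Type*} [PseudoMetricSpace X] [IsUltrametricDist X]
    {x y : X} {r : ℝ} (hr : 0 ≤ r) : closedBall x r = closedBall y r ↔ dist x y ≤ r := by
  refine ⟨fun h ↦ ?_, fun h ↦ closedBall_eq_of_mem (mem_closedBall'.mpr h)⟩
  rw [← mem_closedBall', h]
  exact mem_closedBall_self hr

lemma sUnion_image_closedBall_sphere {E : Type*} [SeminormedAddCommGroup E] [IsUltrametricDist E]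
    {r s : ℝ} (hr : 0 ≤ r) (hrs : r < s) :
    ⋃₀ ((closedBall · r) '' sphere (0 : E) s) = sphere 0 s := by
  refine subset_antisymm ?_ fun x hx ↦ ⟨_, ⟨x, hx, rfl⟩, mem_closedBall_self hr⟩
  rintro y ⟨_, ⟨x, hx, rfl⟩, hy⟩
  rw [mem_sphere_zero_iff_norm] at hx ⊢
  rw [mem_closedBall_iff_norm] at hy
  have hlt : ‖y - x‖ < ‖x‖ := hx ▸ hy.trans_lt hrs
  rw [← sub_add_cancel y x, norm_add_eq_max_of_norm_ne_norm hlt.ne,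
    max_eq_right hlt.le, hx]

end IsUltrametricDist

namespace Padic

variable {p : ℕ} [Fact p.Prime]

lemma setOf_add_mul_eq_closedBall (x w : ℚ_[p]) :
    {y | ∃ c : ℤ_[p], y = x + w * (c : ℚ_[p])} = closedBall x ‖w‖ := by
  ext y
  rw [Set.mem_ofPred_eq, mem_closedBall_iff_norm]
  constructor
  · rintro ⟨c, rfl⟩
    rw [add_sub_cancel_left, norm_mul]
    exact mul_le_of_le_one_right (norm_nonneg w) c.2
  · intro hy
    rcases eq_or_ne w 0 with rfl | hw
    · exact ⟨0, by simpa [sub_eq_zero] using hy⟩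
    refine ⟨⟨(y - x) / w, ?_⟩, by simp [mul_div_cancel₀ _ hw]⟩
    rw [norm_div]
    exact div_le_one_of_le₀ hy (norm_nonneg w)

lemma sphere_zero_pow_eq_range_units (i : ℕ) :
    sphere (0 : ℚ_[p]) ((p : ℝ) ^ (-(i : ℤ))) = Set.range fun z : ℤ_[p]ˣ ↦ (p : ℚ_[p]) ^ i * z := by
  have hp0 : p ≠ 0 := (Fact.out : p.Prime).ne_zero
  have hpi : (p : ℚ_[p]) ^ i ≠ 0 := pow_ne_zero _ (Nat.cast_ne_zero.mpr hp0)
  ext x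
  rw [mem_sphere_zero_iff_norm]
  constructor
  · intro hx
    have hu : ‖x / (p : ℚ_[p]) ^ i‖ = 1 := by
      rw [norm_div, Padic.norm_p_pow, hx, div_self (zpow_ne_zero _ (Nat.cast_ne_zero.mpr hp0))]
    exact ⟨PadicInt.mkUnits hu, by simp [mul_div_cancel₀ _ hpi]⟩
  · rintro ⟨z, rfl⟩
    simp

lemma closedBall_pow_mul_eq_iff (i n : ℕ) (z z' : ℤ_[p]) :
    closedBall ((p : ℚ_[p]) ^ i * z) ((p : ℝ) ^ (-((i + n : ℕ) : ℤ))) =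
        closedBall ((p : ℚ_[p]) ^ i * z') ((p : ℝ) ^ (-((i + n : ℕ) : ℤ))) ↔
      PadicInt.toZModPow n z = PadicInt.toZModPow n z' := by
  have hp : (0 : ℝ) < p := mod_cast (Fact.out : p.Prime).pos
  rw [IsUltrametricDist.closedBall_eq_closedBall_iff (by positivity), dist_eq_norm, ← mul_sub,
    norm_mul, Padic.norm_p_pow, Nat.cast_add, neg_add, zpow_add₀ hp.ne',
    mul_le_mul_iff_right₀ (by positivity), ← PadicInt.coe_sub, PadicInt.padic_norm_e_of_padicInt,
    PadicInt.norm_le_pow_iff_mem_span_pow, ← PadicInt.ker_toZModPow, RingHom.mem_ker, map_sub,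
    sub_eq_zero]

lemma natCard_image_closedBall_sphere (i : ℕ) {n : ℕ} (hn : 1 ≤ n) :
    Nat.card ((closedBall · ((p : ℝ) ^ (-((i + n : ℕ) : ℤ)))) ''
      sphere (0 : ℚ_[p]) ((p : ℝ) ^ (-(i : ℤ)))) = Nat.totient (p ^ n) := by
  have : Fact (1 < p ^ n) := ⟨Nat.one_lt_pow (by omega) (Fact.out : p.Prime).one_lt⟩
  set f := PadicInt.toZModPow (p := p) n
  have hf : Surjective f := ZMod.ringHom_surjective f
  rw [sphere_zero_pow_eq_range_units, ← Set.range_comp, ← ZMod.card_units_eq_totient,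
    ← Nat.card_eq_fintype_card]
  refine Nat.card_range_of_surjective_of_eq_iff
    (IsLocalRing.surjective_units_map_of_local_ringHom f hf (.of_surjective f hf)) fun z z' ↦ ?_
  rw [comp_apply, comp_apply, closedBall_pow_mul_eq_iff, Units.ext_iff]
  rfl

end Padic

lemma orbitFamily_eq_image_closedBall {p : ℕ} [Fact p.Prime] (m : ℕ) {a : ℚ_[p]} {k : ℕ}
    (hk : ‖a‖ = (p : ℝ) ^ (-(k : ℤ))) (i : ℕ) :
    orbitFamily p m a i = (closedBall · ((p : ℝ) ^ (-((i + (i * m + k) : ℕ) : ℤ)))) ''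
      sphere 0 ((p : ℝ) ^ (-(i : ℤ))) := by
  have hp : (p : ℝ) ≠ 0 := Nat.cast_ne_zero.mpr (Fact.out : p.Prime).ne_zero
  ext s
  simp only [orbitFamily, Set.mem_ofPred_eq, Set.mem_image, mem_sphere_zero_iff_norm]
  refine exists_congr fun x ↦ and_congr_right fun hx ↦ ?_
  rw [Padic.setOf_add_mul_eq_closedBall, eq_comm, norm_mul, norm_pow, hk, hx, ← zpow_natCast,
    ← zpow_mul, ← zpow_add₀ hp]
  push_cast
  ring_nf

theorem stmt6_general {p : ℕ} [Fact p.Prime] (m : ℕ) (hm : 1 ≤ m)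
    (a : ℚ_[p]) (k : ℕ) (hk : ‖a‖ = (p : ℝ) ^ (-(k : ℤ))) :
    ∃ i₀ : ℕ, 1 ≤ i₀ ∧ ∀ i ≥ i₀,
      (⋃₀ orbitFamily p m a i = {y : ℚ_[p] | ‖y‖ = (p : ℝ) ^ (-(i : ℤ))}) ∧
      (∀ s ∈ orbitFamily p m a i, ∀ t ∈ orbitFamily p m a i, s ≠ t → Disjoint s t) ∧
      Nat.card (orbitFamily p m a i) = p ^ (i * m + k - 1) * (p - 1) := by
  refine ⟨1, le_rfl, fun i hi ↦ ?_⟩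
  have hp : (1 : ℝ) < p := mod_cast (Fact.out : p.Prime).one_lt
  have hn : 1 ≤ i * m + k := le_add_right (Nat.mul_pos hi hm)
  rw [orbitFamily_eq_image_closedBall m hk]
  refine ⟨?_, ?_, ?_⟩
  · rw [IsUltrametricDist.sUnion_image_closedBall_sphere (by positivity)
      (zpow_lt_zpow_right₀ hp (by push_cast; omega))]
    ext y
    exact mem_sphere_zero_iff_norm
  · rintro _ ⟨x, -, rfl⟩ _ ⟨y, -, rfl⟩ hne
    exact (IsUltrametricDist.closedBall_eq_or_disjoint x y _).resolve_left hne
  · rw [Padic.natCard_image_closedBall_sphere i hn, Nat.totient_prime_pow Fact.out (by omega)]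

/-- if `ord_p(a) = k`, then for all sufficiently large `i ≥ 1`, the
circle `C(0, p^{-i}) = p^i ℤ_p^×` is partitioned into exactly `p^{im+k-1}(p-1)`
distinct `ℤ_p`-orbits of `f_{m+1,a}`, each orbit being a coset `x + a x^{m+1} ℤ_p`. -/
theorem stmt6 {p : ℕ} [Fact p.Prime] (m : ℕ) (hm : 1 ≤ m)
    (a : ℚ_[p]) (ha : a ≠ 0) (k : ℕ) (hk : ‖a‖ = (p : ℝ) ^ (-(k : ℤ))) :
    ∃ i₀ : ℕ, 1 ≤ i₀ ∧ ∀ i ≥ i₀,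
      (⋃₀ orbitFamily p m a i = {y : ℚ_[p] | ‖y‖ = (p : ℝ) ^ (-(i : ℤ))}) ∧
      (∀ s ∈ orbitFamily p m a i, ∀ t ∈ orbitFamily p m a i, s ≠ t → Disjoint s t) ∧
      Nat.card (orbitFamily p m a i) = p ^ (i * m + k - 1) * (p - 1) :=
  stmt6_general m hm a k hk
end

section
/- Let V be a ℚ_p-vector space with a non-archimedean norm, Δ_V = {v : |v| ≤ 1}, and let (e_λ)_{λ∈L} be a family of elements of Δ_V whose images in Δ_V / p Δ_V form a basis of this 𝔽_p-vector space. Then the family (e_λ) is linearly independent over ℚ_p, and if v = Σ_λ ξ_λ e_λ (finite sum) and |v|₁ := max_λ |ξ_λ|, then (1/p) |v|₁ ≤ |v| ≤ |v|₁. -/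
/-!
The upper bound is the ultrametric inequality. For the lower bound, divide `ξ` by a coefficient
`c` of maximal norm: the result has `ℤ_p`-coefficients one of which is a unit, so by the
independence of the `e_λ` modulo `pΔ_V` (the ball of radius `1/p`) its combination has norm
`> 1/p`, and scaling back by `c` gives `‖v‖ ≥ ‖c‖ / p = |v|₁ / p`. Linear independence follows
from `|v|₁ ≤ p ‖v‖`.
-/

open Finsupp

section NormedField

variable {K V L : Type*} [NormedField K] [SeminormedAddCommGroup V] [Module K V]
  {e : L → V}

theorem norm_linearCombination_le_sup_nnnorm [IsUltrametricDist V]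
    (hsmul : ∀ (c : K) (v : V), ‖c • v‖ ≤ ‖c‖ * ‖v‖) (he : ∀ l, ‖e l‖ ≤ 1) (ξ : L →₀ K) :
    ‖linearCombination K e ξ‖ ≤ ((ξ.support.sup fun l => ‖ξ l‖₊ : NNReal) : ℝ) := by
  rw [linearCombination_apply, ← coe_nnnorm, NNReal.coe_le_coe]
  refine IsUltrametricDist.nnnorm_sum_le_of_forall_le fun l hl => ?_
  calc ‖ξ l • e l‖₊ ≤ ‖ξ l‖₊ := by
        rw [← NNReal.coe_le_coe, coe_nnnorm, coe_nnnorm]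
        exact (hsmul _ _).trans (mul_le_of_le_one_right (norm_nonneg _) (he l))
    _ ≤ ξ.support.sup fun l => ‖ξ l‖₊ := Finset.le_sup (f := fun l => ‖ξ l‖₊) hl

theorem sup_nnnorm_mul_le_norm_linearCombination
    (hsmul : ∀ (c : K) (v : V), ‖c • v‖ = ‖c‖ * ‖v‖) {r : ℝ}
    (hr : ∀ η : L →₀ K, (∀ l, ‖η l‖ ≤ 1) → (∃ l, ‖η l‖ = 1) → r ≤ ‖linearCombination K e η‖)
    (ξ : L →₀ K) :
    ((ξ.support.sup fun l => ‖ξ l‖₊ : NNReal) : ℝ) * r ≤ ‖linearCombination K e ξ‖ := by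
  rcases eq_or_ne ξ 0 with rfl | hξ
  · simp
  obtain ⟨l₀, hl₀, hsup⟩ :=
    Finset.exists_mem_eq_sup ξ.support (support_nonempty_iff.mpr hξ) fun l => ‖ξ l‖₊
  have hc : ξ l₀ ≠ 0 := mem_support_iff.mp hl₀
  have hmax : ∀ l, ‖ξ l‖ ≤ ‖ξ l₀‖ := fun l => by
    by_cases hl : l ∈ ξ.support
    · exact_mod_cast hsup ▸ Finset.le_sup (f := fun l => ‖ξ l‖₊) hl
    · simp [notMem_support_iff.mp hl]
  have hnormalized : r ≤ ‖linearCombination K e ((ξ l₀)⁻¹ • ξ)‖ := by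
    refine hr _ (fun l => ?_) ⟨l₀, ?_⟩
    · rw [Finsupp.smul_apply, smul_eq_mul, norm_mul, norm_inv,
        inv_mul_le_one₀ (norm_pos_iff.mpr hc)]
      exact hmax l
    · rw [Finsupp.smul_apply, smul_eq_mul, inv_mul_cancel₀ hc, norm_one]
  have hξ_eq : ξ = ξ l₀ • (ξ l₀)⁻¹ • ξ := by rw [smul_smul, mul_inv_cancel₀ hc, one_smul]
  rw [hsup, coe_nnnorm, hξ_eq, map_smul, hsmul, ← hξ_eq]
  exact mul_le_mul_of_nonneg_left hnormalized (norm_nonneg _)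

theorem linearIndependent_of_sup_nnnorm_le (C : ℝ)
    (h : ∀ ξ : L →₀ K,
      ((ξ.support.sup fun l => ‖ξ l‖₊ : NNReal) : ℝ) ≤ C * ‖linearCombination K e ξ‖) :
    LinearIndependent K e := by
  refine linearIndependent_iff.mpr fun ξ hξ => ?_
  have hsup := h ξ
  rw [hξ, norm_zero, mul_zero, ← NNReal.coe_zero, NNReal.coe_le_coe, nonpos_iff_eq_zero,
    ← bot_eq_zero', Finset.sup_eq_bot_iff] at hsup
  ext l
  by_cases hl : l ∈ ξ.support
  · simpa using hsup l hl
  · exact notMem_support_iff.mp hl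

end NormedField

section Padic

variable {p : ℕ} [Fact p.Prime] {L : Type*}

theorem PadicInt.exists_mapRange_coe_eq (ξ : L →₀ ℚ_[p]) (h : ∀ l, ‖ξ l‖ ≤ 1) :
    ∃ η : L →₀ ℤ_[p], η.mapRange PadicInt.Coe.ringHom (map_zero _) = ξ := by
  refine ⟨onFinset ξ.support (fun l => (⟨ξ l, h l⟩ : ℤ_[p])) fun l hl => ?_, ?_⟩
  · exact mem_support_iff.mpr fun h0 => hl (Subtype.ext h0)
  · ext l
    rfl

theorem PadicInt.le_norm_linearCombination_of_forall_lt {V : Type*} [SeminormedAddCommGroup V]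
    [Module ℚ_[p] V] {e : L → V} {r : ℝ}
    (h : ∀ ζ : L →₀ ℤ_[p], (∃ l ∈ ζ.support, ‖ζ l‖ = 1) →
      r < ‖ζ.sum fun l c => (c : ℚ_[p]) • e l‖)
    (η : L →₀ ℚ_[p]) (hle : ∀ l, ‖η l‖ ≤ 1) (hone : ∃ l, ‖η l‖ = 1) :
    r ≤ ‖linearCombination ℚ_[p] e η‖ := by
  obtain ⟨ζ, rfl⟩ := PadicInt.exists_mapRange_coe_eq η hle
  obtain ⟨l, hl⟩ : ∃ l, ‖ζ l‖ = 1 := hone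
  have hl_mem : l ∈ ζ.support := mem_support_iff.mpr (norm_ne_zero_iff.mp (hl ▸ one_ne_zero))
  rw [linearCombination_apply,
    sum_mapRange_index (h := fun l c => c • e l) fun _ => zero_smul _ _]
  exact (h ζ ⟨l, hl_mem, hl⟩).le

end Padic

theorem stmt7_general {p : ℕ} [Fact p.Prime] {V : Type*} [NormedAddCommGroup V]
    [Module ℚ_[p] V] [IsUltrametricDist V]
    (hsmul : ∀ (c : ℚ_[p]) (v : V), ‖c • v‖ = ‖c‖ * ‖v‖)
    {L : Type*} (e : L → V) (he : ∀ l, ‖e l‖ ≤ 1)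
    (hind : ∀ ξ : L →₀ ℤ_[p], (∃ l ∈ ξ.support, ‖ξ l‖ = 1) →
      (1 : ℝ) / p < ‖ξ.sum fun l c => (c : ℚ_[p]) • e l‖) :
    LinearIndependent ℚ_[p] e ∧
    ∀ ξ : L →₀ ℚ_[p],
      ((ξ.support.sup fun l => ‖ξ l‖₊ : NNReal) : ℝ) / p ≤ ‖ξ.sum fun l c => c • e l‖ ∧
      ‖ξ.sum fun l c => c • e l‖ ≤ ((ξ.support.sup fun l => ‖ξ l‖₊ : NNReal) : ℝ) := by
  have hp : (0 : ℝ) < p := by exact_mod_cast (Fact.out : p.Prime).pos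
  have hlower (ξ : L →₀ ℚ_[p]) :
      ((ξ.support.sup fun l => ‖ξ l‖₊ : NNReal) : ℝ) / p ≤ ‖linearCombination ℚ_[p] e ξ‖ := by
    rw [div_eq_mul_one_div]
    exact sup_nnnorm_mul_le_norm_linearCombination hsmul
      (PadicInt.le_norm_linearCombination_of_forall_lt hind) ξ
  refine ⟨linearIndependent_of_sup_nnnorm_le p fun ξ => ?_, fun ξ => ?_⟩
  · rw [mul_comm, ← div_le_iff₀ hp]
    exact hlower ξ
  · rw [← linearCombination_apply]
    exact ⟨hlower ξ, norm_linearCombination_le_sup_nnnorm (fun c v => (hsmul c v).le) he ξ⟩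

/-- Bourbaki: let `V` be a `ℚ_p`-vector space with a non-archimedean
norm (`‖c • v‖ = ‖c‖ ‖v‖`, ultrametric), and `(e_λ)` a family in the unit ball
`Δ_V` whose images in `Δ_V / p Δ_V` form an `𝔽_p`-basis (encoded by: any
`ℤ_p`-combination with a unit coefficient has norm `> 1/p`, and every `v ∈ Δ_V`
is within `1/p` of a finite `ℤ_p`-combination).  Then `(e_λ)` is linearly
independent over `ℚ_p`, and for `v = Σ ξ_λ e_λ` with `|v|₁ = max ‖ξ_λ‖`, one has
`(1/p)|v|₁ ≤ ‖v‖ ≤ |v|₁`. -/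
theorem stmt7 {p : ℕ} [Fact p.Prime] {V : Type*} [NormedAddCommGroup V]
    [Module ℚ_[p] V] [IsUltrametricDist V]
    (hsmul : ∀ (c : ℚ_[p]) (v : V), ‖c • v‖ = ‖c‖ * ‖v‖)
    {L : Type*} (e : L → V) (he : ∀ l, ‖e l‖ ≤ 1)
    (hind : ∀ ξ : L →₀ ℤ_[p], (∃ l ∈ ξ.support, ‖ξ l‖ = 1) →
      (1 : ℝ) / p < ‖ξ.sum fun l c => (c : ℚ_[p]) • e l‖)
    (hspan : ∀ v : V, ‖v‖ ≤ 1 → ∃ ξ : L →₀ ℤ_[p],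
      ‖v - ξ.sum fun l c => (c : ℚ_[p]) • e l‖ ≤ 1 / p) :
    LinearIndependent ℚ_[p] e ∧
    ∀ ξ : L →₀ ℚ_[p],
      ((ξ.support.sup fun l => ‖ξ l‖₊ : NNReal) : ℝ) / p ≤ ‖ξ.sum fun l c => c • e l‖ ∧
      ‖ξ.sum fun l c => c • e l‖ ≤ ((ξ.support.sup fun l => ‖ξ l‖₊ : NNReal) : ℝ) :=
  stmt7_general hsmul e he hind
end

section
/- Let X and Y be bullseye spaces and suppose there exist n₀, x₀, y₀ ∈ ℕ with x(n) = x₀ and y(n) = y₀ for all n ≥ n₀. Then there exists a bijective (x₀/y₀, y₀/x₀)-isomorphism β : X → Y, and for any α > x₀/y₀ there is no surjective α-morphism from X to Y. -/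
open Finset

noncomputable def ringIdx (Z : ℕ → Type*) [∀ n, Fintype (Z n)] (p : Σ n, Z n) : ℕ :=
  (∑ m ∈ Finset.range p.1, Fintype.card (Z m)) + (Fintype.equivFin (Z p.1) p.2 : ℕ)

lemma ringIdx_ge (Z : ℕ → Type*) [∀ n, Fintype (Z n)] (p : Σ n, Z n) :
    ∑ m ∈ Finset.range p.1, Fintype.card (Z m) ≤ ringIdx Z p := Nat.le_add_right _ _

lemma ringIdx_lt (Z : ℕ → Type*) [∀ n, Fintype (Z n)] (p : Σ n, Z n) :
    ringIdx Z p < ∑ m ∈ Finset.range (p.1+1), Fintype.card (Z m) := by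
  have h := (Fintype.equivFin (Z p.1) p.2).2
  simp only [ringIdx, Finset.sum_range_succ]
  omega

lemma ringIdx_injective (Z : ℕ → Type*) [∀ n, Fintype (Z n)] :
    Function.Injective (ringIdx Z) := by
  have key : ∀ (p q : Σ n, Z n), p.1 < q.1 → ringIdx Z p ≠ ringIdx Z q := by
    intro p q hlt
    have h1 := ringIdx_lt Z p
    have h2 := ringIdx_ge Z q
    have h3 : ∑ m ∈ Finset.range (p.1+1), Fintype.card (Z m)
        ≤ ∑ m ∈ Finset.range q.1, Fintype.card (Z m) :=
      Finset.sum_le_sum_of_subset (Finset.range_subset_range.mpr hlt)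
    omega
  rintro ⟨n, a⟩ ⟨m, b⟩ h
  rcases lt_trichotomy n m with hlt | rfl | hlt
  · exact absurd h (key _ _ hlt)
  · simp only [ringIdx] at h
    have h2 : (Fintype.equivFin (Z n) a : ℕ) = (Fintype.equivFin (Z n) b : ℕ) := by omega
    have h3 : a = b := (Fintype.equivFin (Z n)).injective (Fin.val_injective h2)
    rw [h3]
  · exact absurd h.symm (key _ _ hlt)

lemma ringIdx_surjective (Z : ℕ → Type*) [∀ n, Fintype (Z n)]
    (h : ∀ i, ∃ n, i < ∑ m ∈ Finset.range n, Fintype.card (Z m)) :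
    Function.Surjective (ringIdx Z) := by
  intro i
  classical
  have hn : i < ∑ m ∈ Finset.range (Nat.find (h i)), Fintype.card (Z m) := Nat.find_spec (h i)
  generalize hn_def : Nat.find (h i) = n at hn
  have hn0 : n ≠ 0 := by
    intro h0
    rw [h0] at hn
    simp at hn
  obtain ⟨n', rfl⟩ := Nat.exists_eq_succ_of_ne_zero hn0
  have hlow : ∑ m ∈ Finset.range n', Fintype.card (Z m) ≤ i := by
    by_contra hc
    push_neg at hc
    exact Nat.find_min (h i) (by omega) hc
  have hlt : i - ∑ m ∈ Finset.range n', Fintype.card (Z m) < Fintype.card (Z n') := by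
    rw [Finset.sum_range_succ] at hn
    omega
  refine ⟨⟨n', (Fintype.equivFin (Z n')).symm ⟨_, hlt⟩⟩, ?_⟩
  simp only [ringIdx, Equiv.apply_symm_apply]
  omega

lemma cum_eq (c : ℕ → ℕ) (n₀ k : ℕ) (hc : ∀ n ≥ n₀, c n = k) :
    ∀ n, n₀ ≤ n → ∑ m ∈ Finset.range n, c m = (∑ m ∈ Finset.range n₀, c m) + k * (n - n₀) := by
  intro n hn
  induction n with
  | zero =>
    interval_cases n₀
    simp
  | succ n ih =>
    rcases Nat.lt_or_ge n₀ (n+1) with h | h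
    · have hn' : n₀ ≤ n := by omega
      rw [Finset.sum_range_succ, ih hn', hc n hn']
      have : n + 1 - n₀ = (n - n₀) + 1 := by omega
      rw [this]
      ring
    · have : n₀ = n + 1 := by omega
      subst this
      simp

lemma cum_le (c : ℕ → ℕ) (n₀ k : ℕ) (hc : ∀ n ≥ n₀, c n = k) (n : ℕ) :
    ∑ m ∈ Finset.range n, c m ≤ (∑ m ∈ Finset.range n₀, c m) + k * n := by
  rcases le_or_gt n₀ n with h | h
  · rw [cum_eq c n₀ k hc n h]
    have : k * (n - n₀) ≤ k * n := Nat.mul_le_mul_left k (by omega)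
    omega
  · have := Finset.sum_le_sum_of_subset (f := c) (Finset.range_subset_range.mpr h.le)
    omega

lemma cum_ge (c : ℕ → ℕ) (n₀ k : ℕ) (hc : ∀ n ≥ n₀, c n = k) (n : ℕ) :
    k * n ≤ (∑ m ∈ Finset.range n, c m) + k * n₀ := by
  rcases le_or_gt n₀ n with h | h
  · rw [cum_eq c n₀ k hc n h]
    have : k * n ≤ k * (n - n₀) + k * n₀ := by
      rw [← Nat.mul_add]
      exact Nat.mul_le_mul_left k (by omega)
    omega
  · have : k * n ≤ k * n₀ := Nat.mul_le_mul_left k h.le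
    omega

lemma cum_unbounded (c : ℕ → ℕ) (n₀ k : ℕ) (hk : 0 < k) (hc : ∀ n ≥ n₀, c n = k) (i : ℕ) :
    ∃ n, i < ∑ m ∈ Finset.range n, c m := by
  refine ⟨n₀ + i + 1, ?_⟩
  rw [cum_eq c n₀ k hc _ (by omega)]
  have h2 : n₀ + i + 1 - n₀ = i + 1 := by omega
  rw [h2]
  have : i + 1 ≤ k * (i + 1) := Nat.le_mul_of_pos_left _ hk
  omega

/-- `β` is an `α`-morphism of bullseye spaces: it fixes the distinguished point
`∗` (= `none`), and there is `k ∈ ℝ` such that whenever a point of the ring `X_N`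
is sent to a point of the ring `Y_M`, one has `M ≥ αN + k`. -/
def IsAlphaMorphism (X Y : ℕ → Type*) (α : ℝ)
    (β : Option (Σ n, X n) → Option (Σ n, Y n)) : Prop :=
  β none = none ∧ ∃ k : ℝ, ∀ (N : ℕ) (x : X N) (M : ℕ) (y : Y M),
    β (some ⟨N, x⟩) = some ⟨M, y⟩ → α * N + k ≤ M

/-- if the ring sizes are eventually constant, `x(n) = x₀` and
`y(n) = y₀` for `n ≥ n₀`, then there is a bijective `(x₀/y₀, y₀/x₀)`-isomorphism
`β : X → Y` (i.e. `β` is an `x₀/y₀`-morphism and `β⁻¹` a `y₀/x₀`-morphism), and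
for any `α > x₀/y₀` there is no surjective `α`-morphism from `X` to `Y`. -/
theorem stmt13 (X Y : ℕ → Type*) [∀ n, Fintype (X n)] [∀ n, Fintype (Y n)]
    (n₀ x₀ y₀ : ℕ) (hn₀ : 0 < n₀) (hx₀ : 0 < x₀) (hy₀ : 0 < y₀)
    (hx : ∀ n ≥ n₀, Fintype.card (X n) = x₀)
    (hy : ∀ n ≥ n₀, Fintype.card (Y n) = y₀) :
    (∃ β : Option (Σ n, X n) → Option (Σ n, Y n),
      Function.Bijective β ∧ IsAlphaMorphism X Y ((x₀ : ℝ) / y₀) β ∧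
      ∃ k : ℝ, ∀ (N : ℕ) (x : X N) (M : ℕ) (y : Y M),
        β (some ⟨N, x⟩) = some ⟨M, y⟩ → ((y₀ : ℝ) / x₀) * M + k ≤ N) ∧
    ∀ α : ℝ, (x₀ : ℝ) / y₀ < α →
      ¬ ∃ β : Option (Σ n, X n) → Option (Σ n, Y n),
          Function.Surjective β ∧ IsAlphaMorphism X Y α β := by
  constructor
  · -- Part 1: existence of the bijective isomorphism
    classical
    have hXub := cum_unbounded (fun n => Fintype.card (X n)) n₀ x₀ hx₀ hx
    have hYub := cum_unbounded (fun n => Fintype.card (Y n)) n₀ y₀ hy₀ hy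
    let eX : (Σ n, X n) ≃ ℕ := Equiv.ofBijective _ ⟨ringIdx_injective X, ringIdx_surjective X hXub⟩
    let eY : (Σ n, Y n) ≃ ℕ := Equiv.ofBijective _ ⟨ringIdx_injective Y, ringIdx_surjective Y hYub⟩
    let g : (Σ n, X n) ≃ (Σ n, Y n) := eX.trans eY.symm
    have hx0R : (0:ℝ) < x₀ := by exact_mod_cast hx₀
    have hy0R : (0:ℝ) < y₀ := by exact_mod_cast hy₀
    refine ⟨Option.map g, ?_, ⟨rfl, ?_⟩, ?_⟩
    · constructor
      · exact Option.map_injective g.injective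
      · intro o
        match o with
        | none => exact ⟨none, rfl⟩
        | some q => exact ⟨some (g.symm q), by simp⟩
    · -- forward bound
      refine ⟨-(((x₀*n₀ + (∑ m ∈ Finset.range n₀, Fintype.card (Y m)) + y₀ : ℕ)):ℝ)/y₀, ?_⟩
      intro N x M y hβ
      have hg : g ⟨N, x⟩ = ⟨M, y⟩ := by
        simpa using hβ
      have hidx : ringIdx X ⟨N, x⟩ = ringIdx Y ⟨M, y⟩ := by
        have : eY (g ⟨N, x⟩) = eX ⟨N, x⟩ := by simp [g]
        rw [hg] at this
        exact this.symm
      -- nat inequality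
      have h1 : x₀ * N ≤ (∑ m ∈ Finset.range N, Fintype.card (X m)) + x₀ * n₀ :=
        cum_ge _ n₀ x₀ hx N
      have h2 : (∑ m ∈ Finset.range N, Fintype.card (X m)) ≤ ringIdx X ⟨N, x⟩ := ringIdx_ge X (⟨N,x⟩ : Σ n, X n)
      have h3 : ringIdx Y ⟨M, y⟩ < ∑ m ∈ Finset.range (M+1), Fintype.card (Y m) := ringIdx_lt Y _
      have h4 : (∑ m ∈ Finset.range (M+1), Fintype.card (Y m))
          ≤ (∑ m ∈ Finset.range n₀, Fintype.card (Y m)) + y₀ * (M+1) := cum_le _ n₀ y₀ hy _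
      have he1 : y₀ * (M+1) = y₀ * M + y₀ := by ring
      have hnat : x₀ * N ≤ x₀ * n₀ + (∑ m ∈ Finset.range n₀, Fintype.card (Y m)) + y₀ + y₀ * M := by
        omega
      have hR : ((x₀ * N : ℕ):ℝ) ≤ ((x₀ * n₀ + (∑ m ∈ Finset.range n₀, Fintype.card (Y m)) + y₀ + y₀ * M : ℕ):ℝ) := by
        exact_mod_cast hnat
      push_cast at hR
      rw [div_mul_eq_mul_div, neg_div, ← sub_eq_add_neg, ← sub_div, div_le_iff₀ hy0R]
      push_cast
      linarith
    · -- backward bound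
      refine ⟨-(((y₀*n₀ + (∑ m ∈ Finset.range n₀, Fintype.card (X m)) + x₀ : ℕ)):ℝ)/x₀, ?_⟩
      intro N x M y hβ
      have hg : g ⟨N, x⟩ = ⟨M, y⟩ := by simpa using hβ
      have hidx : ringIdx X ⟨N, x⟩ = ringIdx Y ⟨M, y⟩ := by
        have : eY (g ⟨N, x⟩) = eX ⟨N, x⟩ := by simp [g]
        rw [hg] at this
        exact this.symm
      have h1 : y₀ * M ≤ (∑ m ∈ Finset.range M, Fintype.card (Y m)) + y₀ * n₀ :=
        cum_ge _ n₀ y₀ hy M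
      have h2 : (∑ m ∈ Finset.range M, Fintype.card (Y m)) ≤ ringIdx Y ⟨M, y⟩ := ringIdx_ge Y (⟨M,y⟩ : Σ n, Y n)
      have h3 : ringIdx X ⟨N, x⟩ < ∑ m ∈ Finset.range (N+1), Fintype.card (X m) := ringIdx_lt X _
      have h4 : (∑ m ∈ Finset.range (N+1), Fintype.card (X m))
          ≤ (∑ m ∈ Finset.range n₀, Fintype.card (X m)) + x₀ * (N+1) := cum_le _ n₀ x₀ hx _
      have he1 : x₀ * (N+1) = x₀ * N + x₀ := by ring
      have hnat : y₀ * M ≤ y₀ * n₀ + (∑ m ∈ Finset.range n₀, Fintype.card (X m)) + x₀ + x₀ * N := by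
        omega
      have hR : ((y₀ * M : ℕ):ℝ) ≤ ((y₀ * n₀ + (∑ m ∈ Finset.range n₀, Fintype.card (X m)) + x₀ + x₀ * N : ℕ):ℝ) := by
        exact_mod_cast hnat
      push_cast at hR
      rw [div_mul_eq_mul_div, neg_div, ← sub_eq_add_neg, ← sub_div, div_le_iff₀ hx0R]
      push_cast
      linarith
  · -- Part 2: no surjective α-morphism for α > x₀/y₀
    classical
    rintro α hα ⟨β, hsurj, hβ0, k, hk⟩
    have hx0R : (0:ℝ) < x₀ := by exact_mod_cast hx₀
    have hy0R : (0:ℝ) < y₀ := by exact_mod_cast hy₀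
    have hα0 : 0 < α := (div_pos hx0R hy0R).trans hα
    -- counting inequality for every M
    have count : ∀ M : ℕ,
        (∑ m ∈ Finset.range (M+1), Fintype.card (Y m))
          ≤ ∑ n ∈ Finset.range (⌈((M:ℝ) - k)/α⌉₊ + 1), Fintype.card (X n) := by
      intro M
      set Nmax := ⌈((M:ℝ) - k)/α⌉₊ with hNmax
      have hex : ∀ (m : Fin (M+1)) (y : Y (m:ℕ)),
          ∃ q : Σ n, X n, β (some q) = some ⟨(m:ℕ), y⟩ ∧ q.1 ≤ Nmax := by
        intro m y
        obtain ⟨p, hp⟩ := hsurj (some ⟨(m:ℕ), y⟩)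
        match p with
        | none => rw [hβ0] at hp; exact absurd hp (by simp)
        | some q =>
          refine ⟨q, hp, ?_⟩
          obtain ⟨N, x⟩ := q
          have h1 := hk N x (m:ℕ) y hp
          have hmM : ((m:ℕ):ℝ) ≤ (M:ℝ) := by
            exact_mod_cast Nat.lt_succ_iff.mp m.2
          have h2 : (N:ℝ) ≤ ((M:ℝ) - k)/α := by
            rw [le_div_iff₀ hα0]
            nlinarith
          have h3 : (N:ℝ) ≤ (Nmax:ℝ) := h2.trans (Nat.le_ceil _)
          exact_mod_cast h3
      choose φ hφ1 hφ2 using hex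
      have hinj : Function.Injective
          (fun p : Σ m : Fin (M+1), Y (m:ℕ) =>
            (⟨⟨(φ p.1 p.2).1, Nat.lt_succ_of_le (hφ2 p.1 p.2)⟩, (φ p.1 p.2).2⟩ :
              Σ n : Fin (Nmax+1), X (n:ℕ))) := by
        rintro ⟨m₁, y₁⟩ ⟨m₂, y₂⟩ h
        have hq : φ m₁ y₁ = φ m₂ y₂ := by
          have h2 := congrArg (fun r : Σ n : Fin (Nmax+1), X (n:ℕ) => (⟨(r.1:ℕ), r.2⟩ : Σ n, X n)) h
          simpa using h2
        have : β (some (φ m₁ y₁)) = β (some (φ m₂ y₂)) := by rw [hq]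
        rw [hφ1 m₁ y₁, hφ1 m₂ y₂] at this
        have h5 : (⟨(m₁:ℕ), y₁⟩ : Σ n, Y n) = ⟨(m₂:ℕ), y₂⟩ := by
          exact Option.some_injective _ this
        obtain ⟨h6, h7⟩ := Sigma.ext_iff.mp h5
        have h8 : m₁ = m₂ := Fin.ext h6
        subst h8
        have h7' : y₁ = y₂ := eq_of_heq h7
        rw [h7']
      have hcard := Fintype.card_le_of_injective _ hinj
      rw [Fintype.card_sigma, Fintype.card_sigma,
        Fin.sum_univ_eq_sum_range (fun m => Fintype.card (Y m)),
        Fin.sum_univ_eq_sum_range (fun n => Fintype.card (X n))] at hcard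
      exact hcard
    -- turn into a real inequality and derive contradiction
    have key : ∀ M : ℕ, k ≤ (M:ℝ) →
        (y₀:ℝ) * M ≤ (x₀/α) * M + ((∑ m ∈ Finset.range n₀, Fintype.card (X m) : ℕ):ℝ)
          + 2*x₀ + (x₀/α)*(-k) + y₀*n₀ := by
      intro M hMk
      have hc := count M
      set Nmax := ⌈((M:ℝ) - k)/α⌉₊ with hNmax
      have h1 : y₀ * (M+1) ≤ (∑ m ∈ Finset.range (M+1), Fintype.card (Y m)) + y₀ * n₀ :=
        cum_ge _ n₀ y₀ hy (M+1)
      have h2 : (∑ n ∈ Finset.range (Nmax+1), Fintype.card (X n))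
          ≤ (∑ m ∈ Finset.range n₀, Fintype.card (X m)) + x₀ * (Nmax+1) :=
        cum_le _ n₀ x₀ hx _
      have hnat : y₀ * (M+1) ≤ (∑ m ∈ Finset.range n₀, Fintype.card (X m)) + x₀ * (Nmax+1) + y₀ * n₀ := by
        omega
      have hR : ((y₀ * (M+1) : ℕ):ℝ) ≤ (((∑ m ∈ Finset.range n₀, Fintype.card (X m)) + x₀ * (Nmax+1) + y₀ * n₀ : ℕ):ℝ) := by
        exact_mod_cast hnat
      push_cast at hR
      have hceil : (Nmax:ℝ) < ((M:ℝ) - k)/α + 1 := by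
        rw [hNmax]
        exact Nat.ceil_lt_add_one (div_nonneg (by linarith) hα0.le)
      have hexp : (x₀:ℝ) * (((M:ℝ) - k)/α + 1) = (x₀/α)*M + (x₀/α)*(-k) + x₀ := by
        field_simp
        ring
      have hmul : (x₀:ℝ) * Nmax < x₀ * (((M:ℝ) - k)/α + 1) :=
        mul_lt_mul_of_pos_left hceil hx0R
      push_cast
      linarith
    -- choose M large
    have hd : (0:ℝ) < y₀ - x₀/α := by
      rw [sub_pos, div_lt_iff₀ hα0]
      rw [div_lt_iff₀ hy0R] at hα
      linarith
    set C := ((∑ m ∈ Finset.range n₀, Fintype.card (X m) : ℕ):ℝ) + 2*x₀ + (x₀/α)*(-k) + y₀*n₀ with hC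
    obtain ⟨M, hM⟩ := exists_nat_gt (max k (C / (y₀ - x₀/α)))
    have hM1 : k ≤ (M:ℝ) := le_of_lt (lt_of_le_of_lt (le_max_left _ _) hM)
    have hM2 : C / (y₀ - x₀/α) < M := lt_of_le_of_lt (le_max_right _ _) hM
    have h1 := key M hM1
    rw [div_lt_iff₀ hd] at hM2
    have hexpand : ((y₀:ℝ) - x₀/α) * M = y₀*M - (x₀/α)*M := by ring
    linarith
end

section
/- Let X and Y be bullseye spaces and r ≥ 2, n₀, x₀, y₀ ∈ ℕ with x(n) = x₀ and y(n) = y₀ r^n for all n ≥ n₀. Then for every α > 0 there is no surjective α-morphism β : X → Y. -/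
/-!
A surjective `α`-morphism can only hit the ring `Y_M` from rings `X_N` with
`N ≤ (M - k) / α`, so `y(M) ≤ ∑_{N ≤ (M - k)/α} x(N)`. Since `x` is eventually constant,
the right-hand side grows linearly in `M`, whereas `y(M) = y₀ rᴹ` grows exponentially.
-/

open Filter Asymptotics Finset

section BullseyeMaps

variable {X Y : ℕ → Type*} {β : Option (Σ n, X n) → Option (Σ n, Y n)}

theorem IsAlphaMorphism.exists_index_le_floor {α : ℝ} (hα : 0 < α)
    (hβ : IsAlphaMorphism X Y α β) :
    ∃ K : ℝ, 0 ≤ K ∧ ∀ (N : ℕ) (x : X N) (M : ℕ) (y : Y M),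
      β (some ⟨N, x⟩) = some ⟨M, y⟩ → N ≤ ⌊(M + K) / α⌋₊ := by
  obtain ⟨-, k, hk⟩ := hβ
  refine ⟨|k|, abs_nonneg k, fun N x M y h => Nat.le_floor ?_⟩
  rw [le_div_iff₀ hα]
  linarith [hk N x M y h, neg_abs_le k]

theorem card_le_sum_card_of_surjective {M : ℕ} [∀ n, Fintype (X n)] [Fintype (Y M)]
    (hsurj : Function.Surjective β) (h0 : β none = none) {B : ℕ}
    (hB : ∀ (N : ℕ) (x : X N) (y : Y M), β (some ⟨N, x⟩) = some ⟨M, y⟩ → N ≤ B) :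
    Fintype.card (Y M) ≤ ∑ n ∈ range (B + 1), Fintype.card (X n) := by
  have hpre : ∀ y : Y M, ∃ p : Σ n : Fin (B + 1), X n,
      β (some ⟨p.1, p.2⟩) = some ⟨M, y⟩ := by
    intro y
    obtain ⟨_ | ⟨N, x⟩, hx⟩ := hsurj (some ⟨M, y⟩)
    · simp [h0] at hx
    · exact ⟨⟨⟨N, Nat.lt_succ_of_le (hB N x y hx)⟩, x⟩, hx⟩
  choose g hg using hpre
  have hg_inj : Function.Injective g := fun y₁ y₂ h =>
    sigma_mk_injective (Option.some_injective _ ((hg y₁).symm.trans (h ▸ hg y₂)))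
  calc Fintype.card (Y M) ≤ Fintype.card (Σ n : Fin (B + 1), X n) :=
        Fintype.card_le_of_injective g hg_inj
    _ = ∑ n ∈ range (B + 1), Fintype.card (X n) := by
        rw [Fintype.card_sigma, Fin.sum_univ_eq_sum_range (fun n => Fintype.card (X n))]

end BullseyeMaps

theorem sum_range_le_of_eventually_eq_const {f : ℕ → ℕ} {n₀ c : ℕ}
    (hf : ∀ n ≥ n₀, f n = c) (m : ℕ) :
    ∑ n ∈ range m, f n ≤ ∑ n ∈ range n₀, f n + c * m := by
  calc ∑ n ∈ range m, f n ≤ ∑ n ∈ range (n₀ + m), f n :=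
        sum_le_sum_of_subset (range_subset_range.2 (Nat.le_add_left m n₀))
    _ = ∑ n ∈ range n₀, f n + ∑ i ∈ range m, f (n₀ + i) := sum_range_add f n₀ m
    _ = ∑ n ∈ range n₀, f n + c * m := by
        rw [sum_congr rfl fun i _ => hf (n₀ + i) (Nat.le_add_right n₀ i), sum_const,
          card_range, smul_eq_mul, mul_comm]

theorem eventually_affine_lt_const_mul_pow {r c : ℝ} (hr : 1 < r) (hc : 0 < c) (p q : ℝ) :
    ∀ᶠ M : ℕ in atTop, p + q * M < c * r ^ M := by
  have hlo : (fun M : ℕ => p + q * M) =o[atTop] fun M => r ^ M :=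
    (isLittleO_const_left.2 <| Or.inr <| (tendsto_norm_atTop_atTop.comp
      (tendsto_pow_atTop_atTop_of_one_lt hr))).add
      ((isLittleO_coe_const_pow_of_one_lt hr).const_mul_left q)
  filter_upwards [hlo.bound (half_pos hc)] with M hM
  have hpow : 0 < r ^ M := pow_pos (by linarith) M
  rw [Real.norm_of_nonneg hpow.le] at hM
  linarith [le_abs_self (p + q * M), Real.norm_eq_abs (p + q * M), mul_pos hc hpow]

theorem stmt14_general (X Y : ℕ → Type*) [∀ n, Fintype (X n)] [∀ n, Fintype (Y n)]
    (n₀ x₀ y₀ r : ℕ) (hy₀ : 0 < y₀) (hr : 2 ≤ r)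
    (hx : ∀ n ≥ n₀, Fintype.card (X n) = x₀)
    (hy : ∀ n ≥ n₀, Fintype.card (Y n) = y₀ * r ^ n) :
    ∀ α : ℝ, 0 < α →
      ¬ ∃ β : Option (Σ n, X n) → Option (Σ n, Y n),
          Function.Surjective β ∧ IsAlphaMorphism X Y α β := by
  rintro α hα ⟨β, hsurj, hβ⟩
  obtain ⟨K, hK, hidx⟩ := hβ.exists_index_le_floor hα
  set C : ℕ := ∑ n ∈ range n₀, Fintype.card (X n)
  have hbound : ∀ M : ℕ, (Fintype.card (Y M) : ℝ) ≤ C + x₀ * ((M + K) / α + 1) := by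
    intro M
    have hfloor : (⌊(M + K) / α⌋₊ : ℝ) ≤ (M + K) / α := Nat.floor_le (by positivity)
    have hsum := (card_le_sum_card_of_surjective hsurj hβ.1 (hidx · · M)).trans
      (sum_range_le_of_eventually_eq_const hx _)
    calc (Fintype.card (Y M) : ℝ) ≤ C + x₀ * (⌊(M + K) / α⌋₊ + 1) := by exact_mod_cast hsum
      _ ≤ C + x₀ * ((M + K) / α + 1) := by gcongr
  have hr' : (1 : ℝ) < r := by exact_mod_cast hr
  obtain ⟨M, hMn₀, hM⟩ := ((eventually_ge_atTop n₀).and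
    (eventually_affine_lt_const_mul_pow hr' (Nat.cast_pos.2 hy₀)
      (C + x₀ * (K / α + 1)) (x₀ / α))).exists
  have hcard := hbound M
  rw [hy M hMn₀] at hcard
  push_cast at hcard
  have haffine : (C : ℝ) + x₀ * ((M + K) / α + 1) = C + x₀ * (K / α + 1) + x₀ / α * M := by
    ring
  linarith

/-- if `x(n) = x₀` and `y(n) = y₀ rⁿ` for all `n ≥ n₀` with `r ≥ 2`,
then for every `α > 0` there is no surjective `α`-morphism `β : X → Y`. -/
theorem stmt14 (X Y : ℕ → Type*) [∀ n, Fintype (X n)] [∀ n, Fintype (Y n)]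
    (n₀ x₀ y₀ r : ℕ) (hn₀ : 0 < n₀) (hx₀ : 0 < x₀) (hy₀ : 0 < y₀) (hr : 2 ≤ r)
    (hx : ∀ n ≥ n₀, Fintype.card (X n) = x₀)
    (hy : ∀ n ≥ n₀, Fintype.card (Y n) = y₀ * r ^ n) :
    ∀ α : ℝ, 0 < α →
      ¬ ∃ β : Option (Σ n, X n) → Option (Σ n, Y n),
          Function.Surjective β ∧ IsAlphaMorphism X Y α β :=
  stmt14_general X Y n₀ x₀ y₀ r hy₀ hr hx hy
end

section
/- Let r ≥ 2 and 1 < λ ≤ ν be natural numbers, and let X, Y be bullseye spaces with x(n) = x₀ r^{νn}, y(n) = y₀ r^{λn} for all n ≥ n₀. Then there exists a (1, λ/ν)-isomorphism β : X → Y, and for any α > λ/ν there is no surjective α-morphism from Y to X. -/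
/-!
Enumerate each bullseye space ring by ring, so that the points of the ring `Z_N` receive the
indices in `[S_Z(N), S_Z(N+1))`, where `S_Z(N) = ∑_{n<N} z(n)`. Matching the two enumerations
gives a bijection sending `X_N` to `Y_M` only when `S_X(N) < S_Y(M+1)` and
`S_Y(M) < S_X(N+1)`. Since `S_X(N+1)` lies between `r^{νN}` and `r^{νN+c}` (a geometric
series), and likewise for `Y` with exponent `λ`, these inequalities force `N ≤ M + O(1)` and
`λM ≤ νN + O(1)`.

Conversely, a surjective `α`-morphism `Y → X` must cover the ring `X_M`, of size at least
`r^{νM}`, by the rings `Y_n` with `αn + k ≤ M`, which have at most `r^{λ(M-k)/α + c}` points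
in total; when `αν > λ` this fails for large `M`.
-/

open Finset Filter

section Graded

variable (Z : ℕ → Type*) [∀ n, Fintype (Z n)]

def cumCard (N : ℕ) : ℕ := ∑ n ∈ range N, Fintype.card (Z n)

lemma cumCard_mono : Monotone (cumCard Z) := fun _ _ h =>
  sum_le_sum_of_subset (range_subset_range.2 h)

lemma cumCard_succ (N : ℕ) : cumCard Z (N + 1) = cumCard Z N + Fintype.card (Z N) :=
  sum_range_succ _ _

lemma card_le_cumCard_succ (N : ℕ) : Fintype.card (Z N) ≤ cumCard Z (N + 1) := by
  rw [cumCard_succ]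
  exact Nat.le_add_left _ _

noncomputable def gradedIndex (p : Σ n, Z n) : ℕ :=
  cumCard Z p.1 + Fintype.equivFin (Z p.1) p.2

lemma cumCard_le_gradedIndex (p : Σ n, Z n) : cumCard Z p.1 ≤ gradedIndex Z p :=
  Nat.le_add_right _ _

lemma gradedIndex_lt_cumCard_succ (p : Σ n, Z n) : gradedIndex Z p < cumCard Z (p.1 + 1) := by
  rw [cumCard_succ, gradedIndex]
  exact Nat.add_lt_add_left (Fintype.equivFin (Z p.1) p.2).2 _

variable {Z} in
lemma cumCard_lt_of_gradedIndex_eq {W : ℕ → Type*} [∀ n, Fintype (W n)]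
    {p : Σ n, Z n} {q : Σ n, W n} (h : gradedIndex Z p = gradedIndex W q) :
    cumCard Z p.1 < cumCard W (q.1 + 1) :=
  (cumCard_le_gradedIndex Z p).trans_lt (h ▸ gradedIndex_lt_cumCard_succ W q)

lemma gradedIndex_injective : Function.Injective (gradedIndex Z) := by
  have ring_le {p q : Σ n, Z n} (h : gradedIndex Z p = gradedIndex Z q) : p.1 ≤ q.1 :=
    Nat.lt_succ_iff.mp ((cumCard_mono Z).reflect_lt (cumCard_lt_of_gradedIndex_eq h))
  rintro ⟨n, x⟩ ⟨m, y⟩ h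
  obtain rfl : n = m := le_antisymm (ring_le h) (ring_le h.symm)
  simp only [gradedIndex, add_right_inj, Fin.val_inj, EmbeddingLike.apply_eq_iff_eq] at h
  rw [h]

lemma gradedIndex_surjective (hZ : ∀ t, ∃ n, t < cumCard Z n) :
    Function.Surjective (gradedIndex Z) := by
  classical
  intro t
  have hm : Nat.find (hZ t) ≠ 0 := fun h0 => by
    have := Nat.find_spec (hZ t)
    rw [h0, cumCard, sum_range_zero] at this
    exact Nat.not_lt_zero t this
  obtain ⟨n, hn⟩ := Nat.exists_eq_add_one_of_ne_zero hm
  have hlt : t < cumCard Z (n + 1) := hn ▸ Nat.find_spec (hZ t)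
  have hle : cumCard Z n ≤ t := not_lt.mp (Nat.find_min (hZ t) (by omega))
  rw [cumCard_succ] at hlt
  refine ⟨⟨n, (Fintype.equivFin (Z n)).symm ⟨t - cumCard Z n, by omega⟩⟩, ?_⟩
  simp only [gradedIndex, Equiv.apply_symm_apply]
  omega

noncomputable def gradedEquiv (hZ : ∀ t, ∃ n, t < cumCard Z n) : (Σ n, Z n) ≃ ℕ :=
  Equiv.ofBijective (gradedIndex Z) ⟨gradedIndex_injective Z, gradedIndex_surjective Z hZ⟩

end Graded

structure HasPowGrowth (Z : ℕ → Type*) [∀ n, Fintype (Z n)] (r v : ℕ) : Prop where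
  pow_le_card : ∃ n₀, ∀ N ≥ n₀, r ^ (v * N) ≤ Fintype.card (Z N)
  cumCard_le_pow : ∃ c, ∀ N, cumCard Z (N + 1) ≤ r ^ (v * N + c)

namespace HasPowGrowth

variable {Z W : ℕ → Type*} [∀ n, Fintype (Z n)] [∀ n, Fintype (W n)] {r : ℕ}

lemma of_card_eq {n₀ z₀ v : ℕ} (hz₀ : 0 < z₀) (hr : 2 ≤ r) (hv : 0 < v)
    (hz : ∀ n ≥ n₀, Fintype.card (Z n) = z₀ * r ^ (v * n)) : HasPowGrowth Z r v where
  pow_le_card := ⟨n₀, fun N hN => (hz N hN).symm ▸ Nat.le_mul_of_pos_left _ hz₀⟩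
  cumCard_le_pow := by
    set C := cumCard Z n₀ + z₀
    have hq : 2 ≤ r ^ v := hr.trans (Nat.le_self_pow hv.ne' r)
    have card_le (n : ℕ) : Fintype.card (Z n) ≤ C * (r ^ v) ^ n := by
      rcases lt_or_ge n n₀ with hn | hn
      · calc Fintype.card (Z n) ≤ cumCard Z n₀ :=
              (card_le_cumCard_succ Z n).trans (cumCard_mono Z hn)
          _ ≤ C := Nat.le_add_right _ _
          _ ≤ C * (r ^ v) ^ n := Nat.le_mul_of_pos_right _ (by positivity)
      · rw [hz n hn, pow_mul]
        exact Nat.mul_le_mul_right _ (Nat.le_add_left _ _)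
    refine ⟨v + C, fun N => ?_⟩
    calc cumCard Z (N + 1) ≤ ∑ n ∈ range (N + 1), C * (r ^ v) ^ n :=
          sum_le_sum fun n _ => card_le n
      _ = C * ∑ n ∈ range (N + 1), (r ^ v) ^ n := (mul_sum _ _ _).symm
      _ ≤ C * (r ^ v) ^ (N + 1) :=
          Nat.mul_le_mul_left _ (Nat.geomSum_lt hq fun _ hk => mem_range.1 hk).le
      _ ≤ r ^ C * (r ^ v) ^ (N + 1) := Nat.mul_le_mul_right _ (Nat.lt_pow_self (by omega)).le
      _ = r ^ (v * N + (v + C)) := by ring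

lemma exists_lt_cumCard {v : ℕ} (hZ : HasPowGrowth Z r v) (hr : 1 < r) (hv : 0 < v) :
    ∀ t, ∃ n, t < cumCard Z n := by
  obtain ⟨n₀, hn₀⟩ := hZ.pow_le_card
  intro t
  refine ⟨max n₀ t + 1, ?_⟩
  calc t ≤ max n₀ t := le_max_right _ _
    _ < r ^ max n₀ t := Nat.lt_pow_self hr
    _ ≤ r ^ (v * max n₀ t) := Nat.pow_le_pow_right (by omega) (Nat.le_mul_of_pos_left _ hv)
    _ ≤ Fintype.card (Z (max n₀ t)) := hn₀ _ (le_max_left _ _)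
    _ ≤ cumCard Z (max n₀ t + 1) := card_le_cumCard_succ Z _

lemma exists_mul_le_of_cumCard_lt {a b : ℕ} (hZ : HasPowGrowth Z r a) (hW : HasPowGrowth W r b)
    (hr : 1 < r) : ∃ C, ∀ N M, cumCard Z N < cumCard W (M + 1) → a * N ≤ b * M + C := by
  obtain ⟨n₀, hn₀⟩ := hZ.pow_le_card
  obtain ⟨c, hc⟩ := hW.cumCard_le_pow
  refine ⟨c + a * (n₀ + 1), fun N M hNM => ?_⟩
  rcases le_or_gt N n₀ with hN | hN
  · have : a * N ≤ a * (n₀ + 1) := Nat.mul_le_mul_left _ (by omega)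
    omega
  · obtain ⟨N', rfl⟩ := Nat.exists_eq_add_one_of_ne_zero (by omega : N ≠ 0)
    have hpow : r ^ (a * N') < r ^ (b * M + c) :=
      calc r ^ (a * N') ≤ cumCard Z (N' + 1) :=
            (hn₀ N' (by omega)).trans (card_le_cumCard_succ Z N')
        _ < cumCard W (M + 1) := hNM
        _ ≤ r ^ (b * M + c) := hc M
    have hexp := (Nat.pow_lt_pow_iff_right hr).1 hpow
    have : a ≤ a * (n₀ + 1) := Nat.le_mul_of_pos_right _ (by omega)
    rw [Nat.mul_add_one]
    omega

end HasPowGrowth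

section Isomorphism

variable {X Y : ℕ → Type*} [∀ n, Fintype (X n)] [∀ n, Fintype (Y n)] {r lam nu : ℕ}

theorem exists_bijective_isAlphaMorphism_one (hX : HasPowGrowth X r nu)
    (hY : HasPowGrowth Y r lam) (hr : 1 < r) (hlam : 0 < lam) (hlamnu : lam ≤ nu) :
    ∃ β : Option (Σ n, X n) → Option (Σ n, Y n),
      Function.Bijective β ∧ IsAlphaMorphism X Y (1 : ℝ) β ∧
      ∃ k : ℝ, ∀ (N : ℕ) (x : X N) (M : ℕ) (y : Y M),
        β (some ⟨N, x⟩) = some ⟨M, y⟩ → ((lam : ℝ) / nu) * M + k ≤ N := by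
  have hnu : 0 < nu := hlam.trans_le hlamnu
  let e := (gradedEquiv X (hX.exists_lt_cumCard hr hnu)).trans
    (gradedEquiv Y (hY.exists_lt_cumCard hr hlam)).symm
  have ring_bounds {N M : ℕ} {x : X N} {y : Y M}
      (h : Equiv.optionCongr e (some ⟨N, x⟩) = some ⟨M, y⟩) :
      cumCard X N < cumCard Y (M + 1) ∧ cumCard Y M < cumCard X (N + 1) := by
    have hidx : gradedIndex X ⟨N, x⟩ = gradedIndex Y ⟨M, y⟩ := by
      simp only [e, Equiv.optionCongr_apply, Option.map_some, Option.some_inj, Equiv.trans_apply,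
        Equiv.symm_apply_eq] at h
      exact h
    exact ⟨cumCard_lt_of_gradedIndex_eq hidx, cumCard_lt_of_gradedIndex_eq hidx.symm⟩
  obtain ⟨C, hC⟩ := hX.exists_mul_le_of_cumCard_lt hY hr
  obtain ⟨C', hC'⟩ := hY.exists_mul_le_of_cumCard_lt hX hr
  refine ⟨Equiv.optionCongr e, (Equiv.optionCongr e).bijective,
    ⟨rfl, -C, fun N x M y h => ?_⟩, -(C' / nu : ℝ), fun N x M y h => ?_⟩
  · have hmul : nu * N ≤ nu * (M + C) := by
      nlinarith [hC N M (ring_bounds h).1, Nat.le_mul_of_pos_left C hnu]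
    have : (N : ℝ) ≤ M + C := by exact_mod_cast Nat.le_of_mul_le_mul_left hmul hnu
    linarith
  · have hmul : (lam * M : ℝ) ≤ nu * N + C' := by exact_mod_cast hC' M N (ring_bounds h).2
    rw [div_mul_eq_mul_div, ← sub_eq_add_neg, ← sub_div, div_le_iff₀ (by exact_mod_cast hnu)]
    linarith

lemma card_le_cumCard_of_surjective (β : Option (Σ n, Y n) → Option (Σ n, X n))
    (hβ : Function.Surjective β) (hnone : β none = none) {M T : ℕ}
    (hT : ∀ n (y : Y n) (x : X M), β (some ⟨n, y⟩) = some ⟨M, x⟩ → n ≤ T) :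
    Fintype.card (X M) ≤ cumCard Y (T + 1) := by
  classical
  let S : Finset (Σ n, Y n) := (range (T + 1)).sigma fun _ => univ
  let ringM : Finset (Option (Σ n, X n)) := univ.image fun x : X M => some ⟨M, x⟩
  have hsurj : Set.SurjOn (β ∘ some) S ringM := by
    intro o ho
    obtain ⟨x, -, rfl⟩ := mem_image.1 ho
    obtain ⟨_ | ⟨n, y⟩, hy⟩ := hβ (some ⟨M, x⟩)
    · simp [hnone] at hy
    · exact ⟨⟨n, y⟩, by simp [S, hT n y x hy], hy⟩
  calc Fintype.card (X M) = #ringM :=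
        (card_image_of_injective _ fun x y h => by simpa using h).symm
    _ ≤ #S := card_le_card_of_surjOn _ hsurj
    _ = cumCard Y (T + 1) := by simp [S, cumCard]

theorem not_exists_surjective_isAlphaMorphism (hX : HasPowGrowth X r nu)
    (hY : HasPowGrowth Y r lam) (hr : 1 < r) {α : ℝ} (hα : lam < α * nu) :
    ¬ ∃ β : Option (Σ n, Y n) → Option (Σ n, X n),
      Function.Surjective β ∧ IsAlphaMorphism Y X α β := by
  rintro ⟨β, hβ, hnone, k, hk⟩
  obtain ⟨n₀, hn₀⟩ := hX.pow_le_card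
  obtain ⟨c, hc⟩ := hY.cumCard_le_pow
  have hα0 : 0 < α := by
    by_contra! hα0
    have : α * nu ≤ 0 := mul_nonpos_of_nonpos_of_nonneg hα0 (Nat.cast_nonneg _)
    linarith [(Nat.cast_nonneg lam : (0 : ℝ) ≤ lam)]
  have bound (M : ℕ) (hM : n₀ ≤ M) (hkM : k ≤ M) :
      (α * nu - lam) * M ≤ α * c - lam * k := by
    set T := ⌊(M - k) / α⌋₊
    have hT : (T : ℝ) * α ≤ M - k :=
      (le_div_iff₀ hα0).1 (Nat.floor_le (div_nonneg (sub_nonneg.2 hkM) hα0.le))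
    have hcover : Fintype.card (X M) ≤ cumCard Y (T + 1) :=
      card_le_cumCard_of_surjective β hβ hnone fun n y x h =>
        Nat.le_floor ((le_div_iff₀ hα0).2 (by linarith [hk n y M x h]))
    have hexp : nu * M ≤ lam * T + c :=
      (Nat.pow_le_pow_iff_right hr).1 ((hn₀ M hM).trans (hcover.trans (hc T)))
    have hexp' : (nu * M : ℝ) ≤ lam * T + c := by exact_mod_cast hexp
    nlinarith [mul_le_mul_of_nonneg_left hexp' hα0.le,
      mul_le_mul_of_nonneg_left hT (Nat.cast_nonneg lam : (0 : ℝ) ≤ lam)]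
  obtain ⟨M, hM, hkM, hlarge⟩ := ((eventually_ge_atTop n₀).and
    ((tendsto_natCast_atTop_atTop.eventually_ge_atTop k).and
      ((tendsto_natCast_atTop_atTop.const_mul_atTop (sub_pos.2 hα)).eventually_gt_atTop
        (α * c - lam * k)))).exists
  exact (bound M hM hkM).not_gt hlarge

end Isomorphism

theorem stmt15_general (X Y : ℕ → Type*) [∀ n, Fintype (X n)] [∀ n, Fintype (Y n)]
    (n₀ x₀ y₀ r lam nu : ℕ) (hx₀ : 0 < x₀) (hy₀ : 0 < y₀)
    (hr : 2 ≤ r) (hlam : 1 < lam) (hlamnu : lam ≤ nu)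
    (hx : ∀ n ≥ n₀, Fintype.card (X n) = x₀ * r ^ (nu * n))
    (hy : ∀ n ≥ n₀, Fintype.card (Y n) = y₀ * r ^ (lam * n)) :
    (∃ β : Option (Σ n, X n) → Option (Σ n, Y n),
      Function.Bijective β ∧ IsAlphaMorphism X Y (1 : ℝ) β ∧
      ∃ k : ℝ, ∀ (N : ℕ) (x : X N) (M : ℕ) (y : Y M),
        β (some ⟨N, x⟩) = some ⟨M, y⟩ → ((lam : ℝ) / nu) * M + k ≤ N) ∧
    ∀ α : ℝ, (lam : ℝ) / nu < α →
      ¬ ∃ β : Option (Σ n, Y n) → Option (Σ n, X n),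
          Function.Surjective β ∧ IsAlphaMorphism Y X α β := by
  have hX : HasPowGrowth X r nu := .of_card_eq hx₀ hr (by omega) hx
  have hY : HasPowGrowth Y r lam := .of_card_eq hy₀ hr (by omega) hy
  refine ⟨exists_bijective_isAlphaMorphism_one hX hY (by omega) (by omega) hlamnu,
    fun α hα => not_exists_surjective_isAlphaMorphism hX hY (by omega) ?_⟩
  rwa [div_lt_iff₀ (by exact_mod_cast (by omega : 0 < nu))] at hα

/-- let `r ≥ 2`, `1 < λ ≤ ν`, and suppose `x(n) = x₀ r^{νn}` and
`y(n) = y₀ r^{λn}` for all `n ≥ n₀`.  Then there is a bijective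
`(1, λ/ν)`-isomorphism `β : X → Y` (i.e. `β` is a `1`-morphism and `β⁻¹` a
`λ/ν`-morphism), and for any `α > λ/ν` there is no surjective `α`-morphism from
`Y` to `X`. -/
theorem stmt15 (X Y : ℕ → Type*) [∀ n, Fintype (X n)] [∀ n, Fintype (Y n)]
    (n₀ x₀ y₀ r lam nu : ℕ) (hn₀ : 0 < n₀) (hx₀ : 0 < x₀) (hy₀ : 0 < y₀)
    (hr : 2 ≤ r) (hlam : 1 < lam) (hlamnu : lam ≤ nu)
    (hx : ∀ n ≥ n₀, Fintype.card (X n) = x₀ * r ^ (nu * n))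
    (hy : ∀ n ≥ n₀, Fintype.card (Y n) = y₀ * r ^ (lam * n)) :
    (∃ β : Option (Σ n, X n) → Option (Σ n, Y n),
      Function.Bijective β ∧ IsAlphaMorphism X Y (1 : ℝ) β ∧
      ∃ k : ℝ, ∀ (N : ℕ) (x : X N) (M : ℕ) (y : Y M),
        β (some ⟨N, x⟩) = some ⟨M, y⟩ → ((lam : ℝ) / nu) * M + k ≤ N) ∧
    ∀ α : ℝ, (lam : ℝ) / nu < α →
      ¬ ∃ β : Option (Σ n, Y n) → Option (Σ n, X n),
          Function.Surjective β ∧ IsAlphaMorphism Y X α β :=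
  stmt15_general X Y n₀ x₀ y₀ r lam nu hx₀ hy₀ hr hlam hlamnu hx hy
end

section
/- Let p ≠ 2 be prime and a ∈ ℤ_p^× not a root of unity, written a = ζ a₁ with ζ a primitive k-th root of unity (p ∤ k) and a₁ ∈ 1 + pℤ_p. Let n = ord_p(a₁ − 1). Then the closure of {a^j : j ∈ ℕ} in ℤ_p^× equals (1 + p^n ℤ_p) · ⟨ζ⟩, and consequently the number of distinct orbit closures of the multiplication map L_a(x) = ax on the unit circle ℤ_p^× is N(a) = (p−1) p^{n−1} / k. -/
/-!
Modulo `pⁿ` the element `a = ζ a₁` is congruent to `ζ`, so all powers of `a` lie in the closed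
set `(1 + pⁿℤ_p)⟨ζ⟩`. Conversely `b = aᵏ = a₁ᵏ` is `1 + pⁿc` with `c` a unit (as `p ∤ k`), and
because `p` is odd, `b^(pⁱ) = 1 + p^(n+i)·(unit)`; correcting one `p`-adic digit at a time, the
powers of `b` are dense in `1 + pⁿℤ_p`, and translating by powers of `a` gives the whole set.

The translates `x (1 + pⁿℤ_p)⟨ζ⟩` by units `x` are the preimages of the cosets of `⟨ζ mod pⁿ⟩`
in `(ℤ/pⁿ)ˣ`, a group of order `(p - 1)pⁿ⁻¹`. There `ζ` still has order `k`, since a root of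
unity of order prime to `p` that is `≡ 1 mod p` equals `1`.
-/

open Set

section CommRing

variable {R : Type*} [CommRing R]

theorem exists_one_add_pow_eq (x : R) (r : ℕ) : ∃ t, (1 + x) ^ r = 1 + r * x + x ^ 2 * t := by
  obtain ⟨t, ht⟩ := sq_dvd_add_pow_sub_sub x 1 r
  exact ⟨t, by linear_combination ht⟩

theorem exists_one_add_prime_mul_pow_eq {p : ℕ} (hp : Odd p) (y : R) :
    ∃ e, (1 + p * y) ^ p = 1 + p ^ 2 * y * (1 + p * e) := by
  obtain ⟨e, he⟩ := odd_sq_dvd_geom_sum₂_sub (1 : R) y hp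
  simp only [one_pow, mul_one] at he
  exact ⟨e, by linear_combination -(geom_sum_mul (1 + p * y) p) + p * y * he⟩

end CommRing

theorem Subgroup.card_unit_translates_eq_index {M : Type*} [Monoid M] (K : Subgroup Mˣ)
    {C : Set M} (hC : ∀ z ∈ C, IsUnit z) (hK : ∀ w : Mˣ, (w : M) ∈ C ↔ w ∈ K) :
    Nat.card {s : Set M | ∃ x : M, IsUnit x ∧ s = {y | ∃ z ∈ C, y = x * z}} = K.index := by
  let F : Mˣ ⧸ K → Set M := fun q => Units.val '' (QuotientGroup.mk ⁻¹' {q})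
  have hF : Function.Injective F :=
    (Set.image_injective.mpr Units.val_injective).comp
      ((Set.preimage_injective.mpr QuotientGroup.mk_surjective).comp Set.singleton_injective)
  have horbit (u : Mˣ) : {y | ∃ z ∈ C, y = u * z} = F u := by
    ext y
    simp only [F, mem_image, mem_preimage, mem_singleton_iff]
    constructor
    · rintro ⟨_, hz, rfl⟩
      obtain ⟨z, rfl⟩ := hC _ hz
      exact ⟨u * z, (QuotientGroup.eq.mpr (by rwa [inv_mul_cancel_left, ← hK])).symm, rfl⟩
    · rintro ⟨w, hw, rfl⟩
      exact ⟨↑(u⁻¹ * w), (hK _).mpr (QuotientGroup.eq.mp hw.symm), by simp⟩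
  have hrange :
      {s : Set M | ∃ x : M, IsUnit x ∧ s = {y | ∃ z ∈ C, y = x * z}} = range F := by
    ext s
    constructor
    · rintro ⟨_, ⟨u, rfl⟩, rfl⟩
      exact ⟨u, (horbit u).symm⟩
    · rintro ⟨q, rfl⟩
      induction q using QuotientGroup.induction_on with
      | H u => exact ⟨u, u.isUnit, (horbit u).symm⟩
  rw [hrange, Nat.card_range_of_injective hF]
  rfl

namespace PadicInt

variable {p : ℕ} [hp : Fact p.Prime]

theorem toZModPow_eq_iff_dvd_sub {n : ℕ} {x y : ℤ_[p]} :
    toZModPow n x = toZModPow n y ↔ (p : ℤ_[p]) ^ n ∣ x - y := by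
  rw [← sub_eq_zero, ← map_sub, ← RingHom.mem_ker, ker_toZModPow, Ideal.mem_span_singleton]

theorem toZModPow_surjective (n : ℕ) : Function.Surjective (toZModPow (p := p) n) :=
  fun x => ⟨x.val, by simp⟩

theorem isLocalHom_toZModPow {n : ℕ} (hn : n ≠ 0) : IsLocalHom (toZModPow (p := p) n) :=
  haveI : Fact (1 < p ^ n) := ⟨Nat.one_lt_pow hn hp.out.one_lt⟩
  .of_surjective _ (toZModPow_surjective n)

theorem mem_closure_iff_forall_dvd {s : Set ℤ_[p]} {x : ℤ_[p]} :
    x ∈ closure s ↔ ∀ m : ℕ, ∃ y ∈ s, (p : ℤ_[p]) ^ m ∣ y - x := by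
  simp_rw [Metric.mem_closure_iff, dist_comm x, dist_eq_norm, ← Ideal.mem_span_singleton,
    ← norm_le_pow_iff_mem_span_pow]
  have hp1 : (1 : ℝ) < p := by exact_mod_cast hp.out.one_lt
  constructor
  · intro h m
    obtain ⟨y, hy, hlt⟩ := h _ (zpow_pos (by positivity) (-m))
    exact ⟨y, hy, hlt.le⟩
  · intro h ε hε
    obtain ⟨m, hm⟩ := exists_pow_lt_of_lt_one hε (inv_lt_one_of_one_lt₀ hp1)
    obtain ⟨y, hy, hle⟩ := h m
    exact ⟨y, hy, hle.trans_lt (by rwa [zpow_neg, zpow_natCast, ← inv_pow])⟩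

theorem continuous_toZModPow (n : ℕ) : Continuous (toZModPow (p := p) n) :=
  continuous_iff_isClosed.mpr fun A _ => isClosed_of_closure_subset fun x hx => by
    obtain ⟨y, hy, hyx⟩ := mem_closure_iff_forall_dvd.mp hx n
    rwa [mem_preimage, ← toZModPow_eq_iff_dvd_sub.mpr hyx]

theorem isUnit_add_of_dvd {u d : ℤ_[p]} (hu : IsUnit u) (hd : (p : ℤ_[p]) ∣ d) :
    IsUnit (u + d) := by
  rw [isUnit_iff] at hu ⊢
  rw [← norm_lt_one_iff_dvd] at hd
  rw [norm_add_eq_max_of_ne (by rw [hu]; exact hd.ne'), hu, max_eq_left hd.le]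

theorem isUnit_natCast_of_not_dvd {k : ℕ} (hk : ¬p ∣ k) : IsUnit (k : ℤ_[p]) := by
  rw [isUnit_iff]
  refine le_antisymm (norm_le_one _) (not_lt.mp fun hlt => hk ?_)
  exact_mod_cast (norm_int_lt_one_iff_dvd (k : ℤ)).mp (by exact_mod_cast hlt)

theorem exists_isUnit_eq_pow_mul_of_norm_eq {x : ℤ_[p]} {n : ℕ}
    (hx : ‖x‖ = (p : ℝ) ^ (-(n : ℤ))) : ∃ e, IsUnit e ∧ x = p ^ n * e := by
  obtain ⟨e, rfl⟩ : (p : ℤ_[p]) ^ n ∣ x := by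
    rw [← Ideal.mem_span_singleton, ← norm_le_pow_iff_mem_span_pow]; exact hx.le
  rw [norm_mul, norm_p_pow, mul_eq_left₀ (zpow_ne_zero _ (by exact_mod_cast hp.out.ne_zero))] at hx
  exact ⟨e, isUnit_iff.mpr hx, rfl⟩

theorem exists_natCast_mul_sub_dvd {v : ℤ_[p]} (hv : IsUnit v) (w : ℤ_[p]) :
    ∃ r : ℕ, (p : ℤ_[p]) ∣ r * v - w := by
  obtain ⟨v', hv'⟩ := hv.exists_left_inv
  obtain ⟨r, -, hr⟩ := exists_mem_range (w * v')
  rw [maximalIdeal_eq_span_p, Ideal.mem_span_singleton] at hr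
  exact ⟨r, by simpa [sub_mul, mul_assoc, hv'] using (hr.mul_right v).neg_right⟩

theorem eq_one_of_pow_eq_one_of_dvd_sub_one {ω : ℤ_[p]} {m : ℕ} (hm : ¬p ∣ m) (hω : ω ^ m = 1)
    (h : (p : ℤ_[p]) ∣ ω - 1) : ω = 1 := by
  obtain ⟨t, ht⟩ := exists_one_add_pow_eq (ω - 1) m
  rw [add_sub_cancel, hω] at ht
  have hu : IsUnit ((m : ℤ_[p]) + (ω - 1) * t) :=
    isUnit_add_of_dvd (isUnit_natCast_of_not_dvd hm) (h.mul_right t)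
  have h0 : (ω - 1) * (m + (ω - 1) * t) = 0 := by linear_combination -ht
  exact sub_eq_zero.mp (hu.mul_left_eq_zero.mp h0)

theorem exists_one_add_pow_mul_pow_of_not_dvd {n k : ℕ} (hn : 1 ≤ n) {c : ℤ_[p]} (hc : IsUnit c)
    (hk : ¬p ∣ k) : ∃ c', IsUnit c' ∧ (1 + (p : ℤ_[p]) ^ n * c) ^ k = 1 + p ^ n * c' := by
  obtain ⟨t, ht⟩ := exists_one_add_pow_eq ((p : ℤ_[p]) ^ n * c) k
  refine ⟨k * c + p ^ n * (c ^ 2 * t),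
    isUnit_add_of_dvd ((isUnit_natCast_of_not_dvd hk).mul hc) ?_, by rw [ht]; ring⟩
  exact (dvd_pow_self _ (by omega)).mul_right _

theorem exists_one_add_pow_mul_pow_prime (hp2 : p ≠ 2) {s : ℕ} (hs : 1 ≤ s) {c : ℤ_[p]}
    (hc : IsUnit c) : ∃ c', IsUnit c' ∧ (1 + (p : ℤ_[p]) ^ s * c) ^ p = 1 + p ^ (s + 1) * c' := by
  obtain ⟨e, he⟩ :=
    exists_one_add_prime_mul_pow_eq (hp.out.odd_of_ne_two hp2) ((p : ℤ_[p]) ^ (s - 1) * c)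
  refine ⟨c * (1 + p * e), hc.mul (isUnit_add_of_dvd isUnit_one (dvd_mul_right _ _)), ?_⟩
  obtain ⟨s, rfl⟩ : ∃ s', s = s' + 1 := ⟨s - 1, by omega⟩
  rw [Nat.add_sub_cancel] at he
  rw [pow_succ', mul_assoc, he]
  ring

theorem exists_one_add_pow_mul_pow_prime_pow (hp2 : p ≠ 2) {n : ℕ} (hn : 1 ≤ n) {c : ℤ_[p]}
    (hc : IsUnit c) (i : ℕ) :
    ∃ c', IsUnit c' ∧ (1 + (p : ℤ_[p]) ^ n * c) ^ p ^ i = 1 + p ^ (n + i) * c' := by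
  induction i with
  | zero => exact ⟨c, hc, by simp⟩
  | succ i ih =>
    obtain ⟨c₁, hc₁, h₁⟩ := ih
    obtain ⟨c₂, hc₂, h₂⟩ := exists_one_add_pow_mul_pow_prime hp2 (hn.trans (n.le_add_right i)) hc₁
    exact ⟨c₂, hc₂, by rw [pow_succ, pow_mul, h₁, h₂, add_assoc]⟩

theorem exists_pow_dvd_mul_one_add_pow_sub {m : ℕ} (hm : 1 ≤ m) {c z : ℤ_[p]}
    (hc : IsUnit c) (hz : IsUnit z) (w : ℤ_[p]) :
    ∃ r : ℕ, (p : ℤ_[p]) ^ (m + 1) ∣ z * ((1 + p ^ m * c) ^ r - 1) - p ^ m * w := by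
  -- choose the digit `r` with `r z c ≡ w (mod p)`; the terms of order `p^(2m)` vanish anyway
  obtain ⟨r, q, hq⟩ := exists_natCast_mul_sub_dvd (hz.mul hc) w
  obtain ⟨t, ht⟩ := exists_one_add_pow_eq ((p : ℤ_[p]) ^ m * c) r
  refine ⟨r, q + p ^ (m - 1) * (z * c ^ 2 * t), ?_⟩
  obtain ⟨m, rfl⟩ : ∃ m', m = m' + 1 := ⟨m - 1, by omega⟩
  rw [ht, Nat.add_sub_cancel]
  linear_combination (p : ℤ_[p]) ^ (m + 1) * hq

theorem mem_closure_range_pow_of_dvd_sub_one (hp2 : p ≠ 2) {n : ℕ} (hn : 1 ≤ n) {c x : ℤ_[p]}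
    (hc : IsUnit c) (hx : (p : ℤ_[p]) ^ n ∣ x - 1) :
    x ∈ closure (range ((1 + (p : ℤ_[p]) ^ n * c) ^ ·)) := by
  have hb : IsUnit (1 + (p : ℤ_[p]) ^ n * c) :=
    isUnit_add_of_dvd isUnit_one ((dvd_pow_self _ (by omega)).mul_right _)
  refine mem_closure_iff_forall_dvd.mpr fun m => ?_
  simp only [exists_range_iff]
  induction m with
  | zero => exact ⟨0, by simp⟩
  | succ m ih =>
    rcases Nat.lt_or_ge m n with hmn | hmn
    · exact ⟨0, by rw [pow_zero, ← neg_sub, dvd_neg]; exact (pow_dvd_pow _ hmn).trans hx⟩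
    obtain ⟨j, w, hw⟩ := ih
    obtain ⟨c', hc', hbm⟩ := exists_one_add_pow_mul_pow_prime_pow hp2 hn hc (m - n)
    rw [Nat.add_sub_cancel' hmn] at hbm
    obtain ⟨r, hr⟩ := exists_pow_dvd_mul_one_add_pow_sub (hn.trans hmn) hc' (hb.pow j) (-w)
    refine ⟨j + p ^ (m - n) * r, ?_⟩
    rw [pow_add _ j, pow_mul _ (p ^ (m - n)), hbm]
    convert hr using 1
    linear_combination hw

theorem setOf_one_add_mul_mul_pow_eq_preimage {ζ : ℤ_[p]} (hζ : IsUnit ζ) (n : ℕ) :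
    {x : ℤ_[p] | ∃ (u : ℤ_[p]) (j : ℕ), x = (1 + (p : ℤ_[p]) ^ n * u) * ζ ^ j} =
      toZModPow n ⁻¹' range (toZModPow n ζ ^ ·) := by
  ext x
  simp only [mem_preimage, mem_range, ← map_pow, toZModPow_eq_iff_dvd_sub]
  constructor
  · rintro ⟨u, j, rfl⟩
    exact ⟨j, -(u * ζ ^ j), by ring⟩
  · rintro ⟨j, v, hv⟩
    obtain ⟨ζ', hζ'⟩ := (hζ.pow j).exists_left_inv
    exact ⟨-(v * ζ'), j, by linear_combination -hv + (p : ℤ_[p]) ^ n * v * hζ'⟩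

theorem closure_setOf_pow_eq_preimage (hp2 : p ≠ 2) {n k : ℕ} (hn : 1 ≤ n) (hpk : ¬p ∣ k)
    {a ζ e : ℤ_[p]} (ha : IsUnit a) (hζ : ζ ^ k = 1) (he : IsUnit e)
    (hfact : a = ζ * (1 + p ^ n * e)) :
    closure {x | ∃ j : ℕ, x = a ^ j} = toZModPow n ⁻¹' range (toZModPow n ζ ^ ·) := by
  have hπa : toZModPow n a = toZModPow n ζ :=
    toZModPow_eq_iff_dvd_sub.mpr ⟨ζ * e, by rw [hfact]; ring⟩
  apply subset_antisymm
  · refine closure_minimal ?_ ((isClosed_discrete _).preimage (continuous_toZModPow n))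
    rintro _ ⟨j, rfl⟩
    exact ⟨j, by rw [map_pow, hπa]⟩
  · rintro x ⟨j₀, hx : toZModPow n ζ ^ j₀ = toZModPow n x⟩
    obtain ⟨a', ha'⟩ := ha.exists_left_inv
    obtain ⟨c, hc, hb⟩ := exists_one_add_pow_mul_pow_of_not_dvd hn he hpk
    have hak : a ^ k = 1 + p ^ n * c := by rw [hfact, mul_pow, hζ, one_mul, hb]
    have hx' : (p : ℤ_[p]) ^ n ∣ x * a' ^ j₀ - 1 := by
      rw [← toZModPow_eq_iff_dvd_sub, map_one, map_mul, ← hx, ← hπa, ← map_pow,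
        ← map_mul, ← mul_pow, mul_comm a, ha', one_pow, map_one]
    have hmem := map_mem_closure (continuous_const_mul (a ^ j₀))
      (mem_closure_range_pow_of_dvd_sub_one hp2 hn hc hx')
      (t := {x | ∃ j : ℕ, x = a ^ j}) (by
        rintro _ ⟨s, rfl⟩
        exact ⟨j₀ + k * s, by rw [pow_add, pow_mul, hak]⟩)
    rwa [← mul_assoc, mul_comm _ x, mul_assoc, ← mul_pow, mul_comm a, ha', one_pow,
      mul_one] at hmem

theorem isPrimitiveRoot_toZModPow {n k : ℕ} (hn : 1 ≤ n) {ζ : ℤ_[p]} (hζ : IsPrimitiveRoot ζ k)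
    (hpk : ¬p ∣ k) : IsPrimitiveRoot (toZModPow n ζ) k := by
  refine ⟨by rw [← map_pow, hζ.pow_eq_one, map_one], fun l hl => hζ.dvd_of_pow_eq_one l ?_⟩
  refine eq_one_of_pow_eq_one_of_dvd_sub_one hpk (by rw [← pow_mul, mul_comm, pow_mul,
    hζ.pow_eq_one, one_pow]) ((dvd_pow_self _ (Nat.one_le_iff_ne_zero.mp hn)).trans ?_)
  exact toZModPow_eq_iff_dvd_sub.mp (by rw [map_pow, hl, map_one])

theorem card_unit_translates_preimage_toZModPow {n k : ℕ} (hn : 1 ≤ n) {ζ : ℤ_[p]}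
    (hζ : IsPrimitiveRoot ζ k) (hpk : ¬p ∣ k) :
    Nat.card {s : Set ℤ_[p] | ∃ x : ℤ_[p], ‖x‖ = 1 ∧
        s = {y | ∃ z ∈ toZModPow n ⁻¹' range (toZModPow n ζ ^ ·), y = x * z}} =
      (p - 1) * p ^ (n - 1) / k := by
  have hk : k ≠ 0 := by rintro rfl; exact hpk (dvd_zero p)
  have := isLocalHom_toZModPow (p := p) (n := n) (by omega)
  let f : ℤ_[p]ˣ →* (ZMod (p ^ n))ˣ := Units.map (toZModPow (p := p) n).toMonoidHom
  let ξ := f (hζ.isUnit hk).unit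
  have hξ : IsPrimitiveRoot ξ k :=
    IsPrimitiveRoot.coe_units_iff.mp (isPrimitiveRoot_toZModPow hn hζ hpk)
  let K := (Subgroup.zpowers ξ).comap f
  have hindex : K.index = (p - 1) * p ^ (n - 1) / k := by
    have hf : Function.Surjective f := IsLocalRing.surjective_units_map_of_local_ringHom _
      (toZModPow_surjective n) ‹_›
    have h := (Subgroup.zpowers ξ).index_mul_card
    rw [Nat.card_zpowers, ← hξ.eq_orderOf, Nat.card_eq_fintype_card, ZMod.card_units_eq_totient,
      Nat.totient_prime_pow hp.out hn] at h
    rw [Subgroup.index_comap_of_surjective _ hf]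
    exact Nat.eq_div_of_mul_eq_left hk (by rw [h, mul_comm])
  have hC (z : ℤ_[p]) (hz : z ∈ toZModPow n ⁻¹' range (toZModPow n ζ ^ ·)) : IsUnit z := by
    obtain ⟨j, hj⟩ := hz
    exact isUnit_of_map_unit (toZModPow n) z (hj ▸ ((hζ.isUnit hk).map _).pow j)
  have hK (w : ℤ_[p]ˣ) : (w : ℤ_[p]) ∈ toZModPow n ⁻¹' range (toZModPow n ζ ^ ·) ↔ w ∈ K := by
    rw [Subgroup.mem_comap, ← mem_powers_iff_mem_zpowers, Submonoid.mem_powers_iff]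
    simp only [mem_preimage, mem_range, Units.ext_iff, Units.val_pow_eq_pow_val]
    rfl
  simp_rw [← isUnit_iff]
  rw [Subgroup.card_unit_translates_eq_index K hC hK, hindex]

end PadicInt

theorem stmt17_general (p : ℕ) [Fact p.Prime] (hp2 : p ≠ 2)
    (a ζ a₁ : ℤ_[p]) (ha : ‖a‖ = 1)
    (k : ℕ) (hζ : IsPrimitiveRoot ζ k) (hpk : ¬ p ∣ k)
    (hfact : a = ζ * a₁)
    (n : ℕ) (hn : 0 < n) (hval : ‖a₁ - 1‖ = (p : ℝ) ^ (-(n : ℤ))) :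
    closure {x : ℤ_[p] | ∃ j : ℕ, x = a ^ j} =
      {x : ℤ_[p] | ∃ (u : ℤ_[p]) (j : ℕ), x = (1 + (p : ℤ_[p]) ^ n * u) * ζ ^ j} ∧
    Nat.card {s : Set ℤ_[p] | ∃ x : ℤ_[p], ‖x‖ = 1 ∧
        s = {y : ℤ_[p] | ∃ z ∈ closure {w : ℤ_[p] | ∃ j : ℕ, w = a ^ j}, y = x * z}} =
      (p - 1) * p ^ (n - 1) / k := by
  have hk : k ≠ 0 := by rintro rfl; exact hpk (dvd_zero p)
  obtain ⟨e, he, hae⟩ := PadicInt.exists_isUnit_eq_pow_mul_of_norm_eq hval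
  have hclosure := PadicInt.closure_setOf_pow_eq_preimage hp2 hn hpk
    (PadicInt.isUnit_iff.mpr ha) hζ.pow_eq_one he (by rw [hfact, ← hae, add_sub_cancel])
  refine ⟨hclosure.trans
    (PadicInt.setOf_one_add_mul_mul_pow_eq_preimage (hζ.isUnit hk) n).symm, ?_⟩
  rw [hclosure]
  exact PadicInt.card_unit_translates_preimage_toZModPow hn hζ hpk

/-- let `p ≠ 2` be prime and `a ∈ ℤ_p^×` not a root of unity,
written `a = ζ a₁` with `ζ` a primitive `k`-th root of unity (`p ∤ k`) and
`a₁ ∈ 1 + pℤ_p`, and let `n = ord_p(a₁ - 1)`.  Then the closure of the powers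
`{a^j : j ∈ ℕ}` in `ℤ_p` is `(1 + pⁿℤ_p) · ⟨ζ⟩`, and the number of distinct orbit
closures `x · closure{a^j}` of `L_a(x) = ax` on the unit circle `ℤ_p^×` is
`N(a) = (p-1) p^{n-1} / k`. -/
theorem stmt17 (p : ℕ) [Fact p.Prime] (hp2 : p ≠ 2)
    (a ζ a₁ : ℤ_[p]) (ha : ‖a‖ = 1)
    (hnru : ∀ j : ℕ, 0 < j → a ^ j ≠ 1)
    (k : ℕ) (hζ : IsPrimitiveRoot ζ k) (hpk : ¬ p ∣ k)
    (hfact : a = ζ * a₁) (ha₁ : ‖a₁ - 1‖ < 1)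
    (n : ℕ) (hn : 0 < n) (hval : ‖a₁ - 1‖ = (p : ℝ) ^ (-(n : ℤ))) :
    closure {x : ℤ_[p] | ∃ j : ℕ, x = a ^ j} =
      {x : ℤ_[p] | ∃ (u : ℤ_[p]) (j : ℕ), x = (1 + (p : ℤ_[p]) ^ n * u) * ζ ^ j} ∧
    Nat.card {s : Set ℤ_[p] | ∃ x : ℤ_[p], ‖x‖ = 1 ∧
        s = {y : ℤ_[p] | ∃ z ∈ closure {w : ℤ_[p] | ∃ j : ℕ, w = a ^ j}, y = x * z}} =
      (p - 1) * p ^ (n - 1) / k :=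
  stmt17_general p hp2 a ζ a₁ ha k hζ hpk hfact n hn hval
end

section
/- Let p = 2 and a ∈ ℤ_2^× with a ≡ 3 (mod 4) (i.e. a ∈ (1 + 2ℤ_2) \ (1 + 4ℤ_2)), a not a root of unity, and set n = ord_2(a + 1). Then the closure of {a^j : j ∈ ℕ} in ℤ_2^× equals (1 + 2^{n+1} ℤ_2) ∪ (a + 2^{n+1} ℤ_2). -/
namespace Stmt18Aux

lemma dvd_iff_norm_le (x : ℤ_[2]) (t : ℕ) :
    (2 : ℤ_[2]) ^ t ∣ x ↔ ‖x‖ ≤ (2 : ℝ) ^ (-(t : ℤ)) := by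
  have := PadicInt.norm_le_pow_iff_mem_span_pow x t
  rw [Ideal.mem_span_singleton] at this
  exact_mod_cast this.symm

lemma two_dvd_add_of_odd {u v : ℤ_[2]} (hu : ‖u‖ = 1) (hv : ‖v‖ = 1) :
    (2 : ℤ_[2]) ∣ u + v := by
  have h2 : ∀ x : ℤ_[2], (2 : ℤ_[2]) ∣ x ↔ PadicInt.toZMod x = 0 := by
    intro x
    have hp2 : (((2:ℕ)):ℤ_[2]) = 2 := by norm_num
    rw [← Ideal.mem_span_singleton, ← hp2, ← PadicInt.maximalIdeal_eq_span_p,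
      ← PadicInt.ker_toZMod, RingHom.mem_ker]
  have hzm : ∀ x : ZMod 2, x = 0 ∨ x = 1 := by decide
  have hu' : PadicInt.toZMod u = 1 := by
    rcases hzm (PadicInt.toZMod u) with h | h
    · exact absurd (((h2 u).mpr h)) (by
        intro hd
        have : ‖u‖ < 1 := (PadicInt.norm_lt_one_iff_dvd u).mpr (by exact_mod_cast hd)
        rw [hu] at this; exact lt_irrefl 1 this)
    · exact h
  have hv' : PadicInt.toZMod v = 1 := by
    rcases hzm (PadicInt.toZMod v) with h | h
    · exact absurd (((h2 v).mpr h)) (by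
        intro hd
        have : ‖v‖ < 1 := (PadicInt.norm_lt_one_iff_dvd v).mpr (by exact_mod_cast hd)
        rw [hv] at this; exact lt_irrefl 1 this)
    · exact h
  rw [h2, map_add, hu', hv']
  decide

/-- key cancellation: sum of two elements of exact norm `2^{-t}` has norm `≤ 2^{-(t+1)}`. -/
lemma norm_add_le_of_eq {u v : ℤ_[2]} {t : ℕ} (hu : ‖u‖ = (2 : ℝ) ^ (-(t : ℤ)))
    (hv : ‖v‖ = (2 : ℝ) ^ (-(t : ℤ))) :
    ‖u + v‖ ≤ (2 : ℝ) ^ (-((t : ℤ) + 1)) := by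
  obtain ⟨u', rfl⟩ := (dvd_iff_norm_le u t).mpr hu.le
  obtain ⟨v', rfl⟩ := (dvd_iff_norm_le v t).mpr hv.le
  have hpt : ‖(2 : ℤ_[2]) ^ t‖ = (2 : ℝ) ^ (-(t : ℤ)) := by
    have := PadicInt.norm_p_pow (p := 2) t
    exact_mod_cast this
  have h2t : ((2 : ℝ) ^ (-(t : ℤ))) ≠ 0 := by positivity
  have hu1 : ‖u'‖ = 1 := by
    have := hu
    rw [norm_mul, hpt] at this
    field_simp at this
    linarith [this]
  have hv1 : ‖v'‖ = 1 := by
    have := hv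
    rw [norm_mul, hpt] at this
    field_simp at this
    linarith [this]
  obtain ⟨w, hw⟩ := two_dvd_add_of_odd hu1 hv1
  have : (2:ℤ_[2]) ^ t * u' + (2:ℤ_[2]) ^ t * v' = 2 ^ (t+1) * w := by
    rw [← mul_add, hw]; ring
  rw [this]
  calc ‖(2:ℤ_[2]) ^ (t+1) * w‖ ≤ ‖(2:ℤ_[2]) ^ (t+1)‖ * 1 := by
        rw [norm_mul]
        exact mul_le_mul_of_nonneg_left (PadicInt.norm_le_one w) (norm_nonneg _)
    _ = (2 : ℝ) ^ (-((t:ℤ) + 1)) := by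
        have := PadicInt.norm_p_pow (p := 2) (t + 1)
        rw [mul_one]
        rw [show ((2:ℕ):ℤ_[2]) = (2:ℤ_[2]) by norm_cast] at this
        rw [this]
        push_cast
        ring_nf

lemma norm_eq_of_not_le {y : ℤ_[2]} {t : ℕ} (h1 : ‖y‖ ≤ (2 : ℝ) ^ (-(t : ℤ)))
    (h2 : ¬ ‖y‖ ≤ (2 : ℝ) ^ (-((t : ℤ) + 1))) : ‖y‖ = (2 : ℝ) ^ (-(t : ℤ)) := by
  obtain ⟨y', rfl⟩ := (dvd_iff_norm_le y t).mpr h1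
  have hpt : ‖(2 : ℤ_[2]) ^ t‖ = (2 : ℝ) ^ (-(t : ℤ)) := by
    have := PadicInt.norm_p_pow (p := 2) t
    exact_mod_cast this
  rw [norm_mul, hpt]
  have hy1 : ‖y'‖ = 1 := by
    by_contra h
    have hlt : ‖y'‖ < 1 := lt_of_le_of_ne (PadicInt.norm_le_one y') h
    obtain ⟨w, hw⟩ := (PadicInt.norm_lt_one_iff_dvd y').mp (by exact_mod_cast hlt)
    apply h2
    rw [hw, show (2:ℤ_[2])^t * (((2:ℕ):ℤ_[2]) * w) = 2^(t+1) * w by push_cast; ring]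
    calc ‖(2:ℤ_[2]) ^ (t+1) * w‖ ≤ ‖(2:ℤ_[2]) ^ (t+1)‖ * 1 := by
          rw [norm_mul]
          exact mul_le_mul_of_nonneg_left (PadicInt.norm_le_one w) (norm_nonneg _)
      _ = (2 : ℝ) ^ (-((t:ℤ) + 1)) := by
          have := PadicInt.norm_p_pow (p := 2) (t + 1)
          rw [mul_one]
          rw [show ((2:ℕ):ℤ_[2]) = (2:ℤ_[2]) by norm_cast] at this
          rw [this]; push_cast; ring_nf
  rw [hy1, mul_one]

end Stmt18Aux

lemma norm_pow_one (b : ℤ_[2]) (hb : ‖b‖ = 1) (k : ℕ) : ‖b ^ k‖ = 1 := by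
  induction k with
  | zero => simp
  | succ k ih => rw [pow_succ, norm_mul, ih, hb, one_mul]

lemma exact_pow (b : ℤ_[2]) (hb : ‖b‖ = 1) (m : ℕ) (hm : 2 ≤ m)
    (hbm : ‖b - 1‖ = (2 : ℝ) ^ (-(m : ℤ))) (i : ℕ) :
    ‖b ^ (2 ^ i) - 1‖ = (2 : ℝ) ^ (-((m + i : ℕ) : ℤ)) := by
  induction i with
  | zero => simpa using hbm
  | succ i ih =>
    have hsq : b ^ (2 ^ (i + 1)) - 1 = (b ^ (2 ^ i) - 1) * (b ^ (2 ^ i) + 1) := by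
      rw [pow_succ, pow_mul]; ring
    have hsmall : ‖b ^ (2 ^ i) - 1‖ < 1 / 2 := by
      rw [ih]
      calc (2 : ℝ) ^ (-((m + i : ℕ) : ℤ)) ≤ (2 : ℝ) ^ (-(2 : ℤ)) := by
            apply (zpow_le_zpow_iff_right₀ (by norm_num : (1:ℝ) < 2)).mpr
            omega
        _ < 1 / 2 := by norm_num
    have h2 : ‖(2 : ℤ_[2])‖ = 1 / 2 := by
      have := PadicInt.norm_p (p := 2)
      rw [show ((2:ℕ):ℤ_[2]) = (2:ℤ_[2]) by norm_cast] at this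
      rw [this]; norm_num
    have hplus : ‖b ^ (2 ^ i) + 1‖ = 1 / 2 := by
      have : b ^ (2 ^ i) + 1 = (b ^ (2 ^ i) - 1) + 2 := by ring
      rw [this, PadicInt.norm_add_eq_max_of_ne (by rw [h2]; exact ne_of_lt hsmall), h2]
      exact max_eq_right (le_of_lt hsmall)
    rw [hsq, norm_mul, ih, hplus]
    rw [show (-((m + (i+1) : ℕ) : ℤ)) = -((m + i : ℕ) : ℤ) + (-1) by push_cast; ring,
      zpow_add₀ (by norm_num : (2:ℝ) ≠ 0)]
    norm_num

lemma dense_pows (b : ℤ_[2]) (hb : ‖b‖ = 1) (m : ℕ) (hm : 2 ≤ m)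
    (hbm : ‖b - 1‖ = (2 : ℝ) ^ (-(m : ℤ))) (i : ℕ) (x : ℤ_[2])
    (hx : ‖x - 1‖ ≤ (2 : ℝ) ^ (-(m : ℤ))) :
    ∃ k : ℕ, ‖b ^ k - x‖ ≤ (2 : ℝ) ^ (-((m + i : ℕ) : ℤ)) := by
  induction i with
  | zero => exact ⟨0, by simpa [norm_sub_rev] using hx⟩
  | succ i ih =>
    obtain ⟨k, hk⟩ := ih
    by_cases h : ‖b ^ k - x‖ ≤ (2 : ℝ) ^ (-((m + (i+1) : ℕ) : ℤ))
    · exact ⟨k, h⟩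
    · have hne : ‖b ^ k - x‖ = (2 : ℝ) ^ (-((m + i : ℕ) : ℤ)) := by
        apply Stmt18Aux.norm_eq_of_not_le hk
        intro hcon
        exact h (by rwa [show (-((m + (i+1) : ℕ) : ℤ)) = -(((m+i:ℕ):ℤ) + 1) by push_cast; ring])
      refine ⟨k + 2 ^ i, ?_⟩
      have hdecomp : b ^ (k + 2 ^ i) - x
          = b ^ k * (b ^ (2 ^ i) - 1) + (b ^ k - x) := by
        rw [pow_add]; ring
      have h1 : ‖b ^ k * (b ^ (2 ^ i) - 1)‖ = (2 : ℝ) ^ (-((m + i : ℕ) : ℤ)) := by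
        rw [norm_mul, norm_pow_one b hb, one_mul]
        exact exact_pow b hb m hm hbm i
      have := Stmt18Aux.norm_add_le_of_eq (t := m + i) h1 hne
      rw [hdecomp]
      rwa [show (-((m + (i+1) : ℕ) : ℤ)) = -(((m+i:ℕ):ℤ) + 1) by push_cast; ring]

/-- let `a ∈ ℤ_2^×` with `a ≡ 3 (mod 4)` (i.e. `a ∈ (1+2ℤ_2) \ (1+4ℤ_2)`),
`a` not a root of unity, and `n = ord_2(a + 1)`.  Then the closure of
`{a^j : j ∈ ℕ}` in `ℤ_2` equals `(1 + 2^{n+1}ℤ_2) ∪ (a + 2^{n+1}ℤ_2)`. -/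
theorem stmt18 (a : ℤ_[2])
    (ha3 : ‖a - 3‖ ≤ 1 / 4)
    (hnru : ∀ j : ℕ, 0 < j → a ^ j ≠ 1)
    (n : ℕ) (hval : ‖a + 1‖ = (2 : ℝ) ^ (-(n : ℤ))) :
    closure {x : ℤ_[2] | ∃ j : ℕ, x = a ^ j} =
      {x : ℤ_[2] | ‖x - 1‖ ≤ (2 : ℝ) ^ (-((n : ℤ) + 1))} ∪
      {x : ℤ_[2] | ‖x - a‖ ≤ (2 : ℝ) ^ (-((n : ℤ) + 1))} := by
  have h2 : ‖(2 : ℤ_[2])‖ = 1 / 2 := by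
    have := PadicInt.norm_p (p := 2)
    rw [show ((2:ℕ):ℤ_[2]) = (2:ℤ_[2]) by norm_cast] at this
    rw [this]; norm_num
  have h4 : ‖(4 : ℤ_[2])‖ = 1 / 4 := by
    rw [show (4 : ℤ_[2]) = 2 * 2 by norm_num, norm_mul, h2]; norm_num
  -- `‖a+1‖ ≤ 1/4`
  have ha1le : ‖a + 1‖ ≤ 1 / 4 := by
    have : a + 1 = (a - 3) + 4 := by ring
    rw [this]
    calc ‖(a - 3) + 4‖ ≤ max ‖a - 3‖ ‖(4 : ℤ_[2])‖ := PadicInt.nonarchimedean _ _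
      _ ≤ 1 / 4 := by rw [h4]; exact max_le ha3 le_rfl
  -- `n ≥ 2`
  have hn2 : 2 ≤ n := by
    by_contra hc
    push_neg at hc
    interval_cases n <;> rw [hval] at ha1le <;> norm_num at ha1le
  -- `‖a‖ = 1`
  have h3 : ‖(3 : ℤ_[2])‖ = 1 := by
    rw [show (3 : ℤ_[2]) = 1 + 2 by norm_num,
      PadicInt.norm_add_eq_max_of_ne (by rw [h2, norm_one]; norm_num), norm_one, h2]
    norm_num
  have ha : ‖a‖ = 1 := by
    have : a = (a - 3) + 3 := by ring
    rw [this, PadicInt.norm_add_eq_max_of_ne (by rw [h3]; intro hc; rw [hc] at ha3; norm_num at ha3),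
      h3]
    exact max_eq_right (le_trans ha3 (by norm_num))
  -- `‖a-1‖ = 1/2`
  have han : ‖a + 1‖ < 1 / 2 := lt_of_le_of_lt ha1le (by norm_num)
  have ham : ‖a - 1‖ = 1 / 2 := by
    have : a - 1 = (a + 1) + (-2) := by ring
    rw [this, PadicInt.norm_add_eq_max_of_ne (by rw [norm_neg, h2]; exact ne_of_lt han),
      norm_neg, h2]
    exact max_eq_right (le_of_lt han)
  set m : ℕ := n + 1 with hm
  set b : ℤ_[2] := a ^ 2 with hbdef
  have hcast : (2 : ℝ) ^ (-((n : ℤ) + 1)) = (2 : ℝ) ^ (-(m : ℤ)) := by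
    congr 1
  have hbnorm : ‖b‖ = 1 := by rw [hbdef, sq, norm_mul, ha, one_mul]
  have hb1 : ‖b - 1‖ = (2 : ℝ) ^ (-(m : ℤ)) := by
    have hfac : b - 1 = (a - 1) * (a + 1) := by rw [hbdef]; ring
    rw [hfac, norm_mul, ham, hval, hm]
    rw [show (-(((n:ℕ)+1 : ℕ) : ℤ)) = (-1) + (-(n : ℤ)) by push_cast; ring,
      zpow_add₀ (by norm_num : (2:ℝ) ≠ 0)]
    norm_num
  have hm2 : 2 ≤ m := by omega
  have hcpos : (0:ℝ) < (2 : ℝ) ^ (-(m : ℤ)) := by positivity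
  apply Set.Subset.antisymm
  · -- closure ⊆ union
    apply closure_minimal
    · rintro x ⟨j, rfl⟩
      have heven : ∀ k : ℕ, ‖b ^ k - 1‖ ≤ (2 : ℝ) ^ (-(m : ℤ)) := by
        intro k
        induction k with
        | zero => simpa using le_of_lt hcpos
        | succ k ih =>
          have : b ^ (k+1) - 1 = b ^ k * (b - 1) + (b ^ k - 1) := by ring
          rw [this]
          refine le_trans (PadicInt.nonarchimedean _ _) (max_le ?_ ih)
          rw [norm_mul, norm_pow_one b hbnorm, one_mul, hb1]
      rcases Nat.even_or_odd j with ⟨k, hk⟩ | ⟨k, hk⟩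
      · left
        show ‖a ^ j - 1‖ ≤ _
        rw [hcast, hk, show a ^ (k + k) = b ^ k by rw [hbdef, ← pow_mul]; ring_nf]
        exact heven k
      · right
        show ‖a ^ j - a‖ ≤ _
        rw [hcast, hk, show a ^ (2*k+1) - a = a * (b ^ k - 1) by
          rw [hbdef, ← pow_mul]; ring, norm_mul, ha, one_mul]
        exact heven k
    · apply IsClosed.union <;>
        exact isClosed_le ((continuous_id.sub continuous_const).norm) continuous_const
  · -- union ⊆ closure
    have key : ∀ y : ℤ_[2], ‖y - 1‖ ≤ (2 : ℝ) ^ (-(m : ℤ)) → ∀ ε : ℝ, 0 < ε →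
        ∃ k : ℕ, ‖b ^ k - y‖ < ε := by
      intro y hy ε hε
      obtain ⟨i, hi⟩ := exists_pow_lt_of_lt_one hε (by norm_num : (1/2 : ℝ) < 1)
      obtain ⟨k, hk⟩ := dense_pows b hbnorm m hm2 hb1 i y hy
      refine ⟨k, lt_of_le_of_lt (le_trans hk ?_) hi⟩
      rw [show ((1:ℝ)/2) ^ i = (2:ℝ) ^ (-(i : ℤ)) by
        rw [one_div, inv_pow, ← zpow_natCast, ← zpow_neg]]
      apply (zpow_le_zpow_iff_right₀ (by norm_num : (1:ℝ) < 2)).mpr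
      push_cast; omega
    rintro x (hx | hx)
    · rw [Metric.mem_closure_iff]
      intro ε hε
      obtain ⟨k, hk⟩ := key x (by rw [← hcast]; exact hx) ε hε
      exact ⟨b ^ k, ⟨2 * k, by rw [hbdef, ← pow_mul]⟩, by
        rwa [dist_comm, dist_eq_norm]⟩
    · obtain ⟨u, hu⟩ := PadicInt.isUnit_iff.mpr ha
      have hui : ‖((u⁻¹ : ℤ_[2]ˣ) : ℤ_[2])‖ = 1 := PadicInt.norm_units _
      set y : ℤ_[2] := ((u⁻¹ : ℤ_[2]ˣ) : ℤ_[2]) * x with hydef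
      have hya : ((u⁻¹ : ℤ_[2]ˣ) : ℤ_[2]) * a = 1 := by
        rw [← hu, ← Units.val_mul, inv_mul_cancel, Units.val_one]
      have hay : a * y = x := by
        rw [hydef, ← mul_assoc, ← hu, ← Units.val_mul, mul_inv_cancel, Units.val_one, one_mul]
      have hy1 : ‖y - 1‖ ≤ (2 : ℝ) ^ (-(m : ℤ)) := by
        have : y - 1 = ((u⁻¹ : ℤ_[2]ˣ) : ℤ_[2]) * (x - a) := by
          rw [mul_sub, hya, hydef]
        rw [this, norm_mul, hui, one_mul, ← hcast]
        exact hx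
      rw [Metric.mem_closure_iff]
      intro ε hε
      obtain ⟨k, hk⟩ := key y hy1 ε hε
      refine ⟨a ^ (2 * k + 1), ⟨2 * k + 1, rfl⟩, ?_⟩
      rw [dist_comm, dist_eq_norm]
      have : a ^ (2 * k + 1) - x = a * (b ^ k - y) := by
        rw [mul_sub, hay, hbdef, ← pow_mul, ← pow_succ']
      rw [this, norm_mul, ha, one_mul]
      exact hk
end
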